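/- arXiv:2406.11377 — 8 statements merged into one kernel-verified Lean document; each statement's English description precedes it below -/
import Mathlib

section
/- Vague convergence is not metrizable on the space of all finite signed Borel measures on ℝ. -/
open MeasureTheory Filter

/-- Integral of a function with respect to a finite signed measure, via the
Jordan decomposition. -/
noncomputable def sintegral (s : SignedMeasure ℝ) (f : ℝ → ℝ) : ℝ :=
  (∫ x, f x ∂s.toJordanDecomposition.posPart) -
    ∫ x, f x ∂s.toJordanDecomposition.negPart

/-- Vague convergence of a sequence of finite signed measures: `∫ f dμ_n → ∫ f dμ`
for every continuous `f : ℝ → ℝ` with compact support. -/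
def VagueConv (μ : ℕ → SignedMeasure ℝ) (ν : SignedMeasure ℝ) : Prop :=
  ∀ f : ℝ → ℝ, Continuous f → HasCompactSupport f →
    Tendsto (fun n => sintegral (μ n) f) atTop (nhds (sintegral ν f))

noncomputable def jd (c : NNReal) (a : ℝ) (ha : a ≠ 0) : JordanDecomposition ℝ :=
  { posPart := c • Measure.dirac 0
    negPart := c • Measure.dirac a
    mutuallySingular := by
      refine ⟨{0}ᶜ, (measurableSet_singleton 0).compl, ?_, ?_⟩
      · simp [Measure.smul_apply, Measure.dirac_apply]
      · simp [Measure.smul_apply, Measure.dirac_apply, ha] }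

lemma sintegral_jd (c : NNReal) (a : ℝ) (ha : a ≠ 0) (f : ℝ → ℝ) :
    sintegral (jd c a ha).toSignedMeasure f = (c : ℝ) * f 0 - (c : ℝ) * f a := by
  rw [sintegral, JordanDecomposition.toJordanDecomposition_toSignedMeasure]
  show (∫ x, f x ∂(c • Measure.dirac 0)) - ∫ x, f x ∂(c • Measure.dirac a) = _
  rw [integral_smul_nnreal_measure, integral_smul_nnreal_measure, integral_dirac, integral_dirac]
  simp [NNReal.smul_def]

lemma sintegral_zero (f : ℝ → ℝ) : sintegral 0 f = 0 := by
  rw [sintegral, SignedMeasure.toJordanDecomposition_zero]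
  simp

lemma hpt_aux (n : ℕ) : (1:ℝ)/(n+1) ≠ 0 := by positivity

lemma vague_S (c : NNReal) :
    VagueConv (fun n => (jd c (1/(n+1)) (hpt_aux n)).toSignedMeasure) 0 := by
  intro f hf _
  simp only [sintegral_jd, sintegral_zero]
  have h1 : Tendsto (fun n : ℕ => (1:ℝ)/(n+1)) atTop (nhds 0) :=
    tendsto_one_div_add_atTop_nhds_zero_nat
  have h2 : Tendsto (fun n : ℕ => f (1/(n+1))) atTop (nhds (f 0)) :=
    (hf.tendsto 0).comp h1
  have h3 : Tendsto (fun n : ℕ => (c:ℝ) * f 0 - (c:ℝ) * f (1/(n+1))) atTop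
      (nhds ((c:ℝ) * f 0 - (c:ℝ) * f 0)) :=
    Tendsto.sub tendsto_const_nhds (Tendsto.mul tendsto_const_nhds h2)
  simpa using h3


lemma exists_f (x : ℕ → ℝ) (hpos : ∀ m, 0 < x m) (hanti : StrictAnti x)
    (hle : ∀ m, x m ≤ 1) :
    ∃ f : ℝ → ℝ, Continuous f ∧ HasCompactSupport f ∧ f 0 = 0 ∧
      ∀ m, f (x m) = 1 / (m + 1) := by
  set r : ℕ → ℝ := fun m => x m - x (m + 1) with hr_def
  have hr : ∀ m, 0 < r m := fun m => sub_pos.2 (hanti (Nat.lt_succ_self m))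
  have hrx : ∀ m, r m < x m := fun m => sub_lt_self _ (hpos (m + 1))
  set h : ℕ → ℝ → ℝ := fun m t => (1 / (m + 1)) * max 0 (1 - |t - x m| / r m) with hh_def
  have hpos' : ∀ (m : ℕ), (0:ℝ) < 1 / (m + 1) := fun m => by positivity
  have h_nonneg : ∀ m t, 0 ≤ h m t := fun m t =>
    mul_nonneg (hpos' m).le (le_max_left _ _)
  have h_le : ∀ m t, h m t ≤ 1 / (m + 1) := by
    intro m t
    have : max 0 (1 - |t - x m| / r m) ≤ 1 := by
      apply max_le (by norm_num)
      have : 0 ≤ |t - x m| / r m := div_nonneg (abs_nonneg _) (hr m).le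
      linarith
    calc h m t ≤ (1 / (m + 1)) * 1 := by
          apply mul_le_mul_of_nonneg_left this (hpos' m).le
      _ = 1 / (m + 1) := mul_one _
  have h_le_one : ∀ m t, h m t ≤ 1 := by
    intro m t
    refine (h_le m t).trans ?_
    rw [div_le_one (by positivity)]
    norm_num
  have hbdd : ∀ t, BddAbove (Set.range fun m => h m t) := by
    intro t
    exact ⟨1, by rintro y ⟨m, rfl⟩; exact h_le_one m t⟩
  have h_vanish : ∀ m t, r m ≤ |t - x m| → h m t = 0 := by
    intro m t ht
    have : 1 - |t - x m| / r m ≤ 0 := by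
      have : (1:ℝ) ≤ |t - x m| / r m := (one_le_div (hr m)).2 ht
      linarith
    simp [hh_def, max_eq_left this]
  set f : ℝ → ℝ := fun t => ⨆ m, h m t with hf_def
  have h_self : ∀ m, h m (x m) = 1 / (m + 1) := by
    intro m; simp [hh_def, hr m, (hr m).ne']
  have key1 : ∀ m, f (x m) = 1 / (m + 1) := by
    intro m
    apply le_antisymm
    · apply ciSup_le
      intro j
      rcases lt_or_ge j m with hj | hj
      · have hxle : x m ≤ x (j + 1) := hanti.antitone (by omega)
        have : r j ≤ |x m - x j| := by
          rw [abs_of_nonpos (by linarith [hanti.antitone hj.le, (hanti hj).le])]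
          · simp [hr_def]; linarith
        rw [h_vanish j (x m) this]
        exact (hpos' m).le
      · refine (h_le j (x m)).trans ?_
        apply one_div_le_one_div_of_le (by positivity)
        have : (j:ℝ) ≥ m := by exact_mod_cast hj
        linarith
    · rw [← h_self m]
      exact le_ciSup (hbdd (x m)) m
  have key2 : f 0 = 0 := by
    have : ∀ m, h m 0 = 0 := by
      intro m
      apply h_vanish
      rw [abs_of_nonpos (by linarith [hpos m])]
      have := hrx m
      simp only [zero_sub, neg_neg]
      linarith
    rw [hf_def]
    simp only [this]
    exact ciSup_const
  have key3 : ∀ t ∉ Set.Icc (0:ℝ) 2, f t = 0 := by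
    intro t ht
    have hvan : ∀ m, h m t = 0 := by
      intro m
      apply h_vanish
      have hmem : ¬(0 ≤ t ∧ t ≤ 2) := by simpa [Set.mem_Icc] using ht
      rcases lt_or_ge t 0 with h' | h'
      · rw [abs_of_nonpos (by linarith [hpos m])]
        linarith [hrx m]
      · have h2 : 2 < t := by by_contra hc; push_neg at hc; exact hmem ⟨h', hc⟩
        rw [abs_of_nonneg (by linarith [hle m])]
        linarith [hrx m, hle m]
    show (⨆ m, h m t) = 0
    simp only [hvan]
    exact ciSup_const
  -- continuity
  have hcont : ∀ m, Continuous (h m) := by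
    intro m
    apply Continuous.mul continuous_const
    apply Continuous.max continuous_const
    exact (continuous_const.sub (((continuous_id.sub continuous_const).abs).div_const _))
  set F : ℕ → ℝ → ℝ := fun M => Nat.rec (h 0) (fun M ih => fun t => max (ih t) (h (M + 1) t)) M
    with hF_def
  have hFsucc : ∀ M t, F (M + 1) t = max (F M t) (h (M + 1) t) := fun M t => rfl
  have hFcont : ∀ M, Continuous (F M) := by
    intro M
    induction M with
    | zero => exact hcont 0
    | succ M ih => exact ih.max (hcont (M + 1))
  have hhF : ∀ M j, j ≤ M → ∀ t, h j t ≤ F M t := by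
    intro M
    induction M with
    | zero => intro j hj t; interval_cases j; exact le_refl _
    | succ M ih =>
      intro j hj t
      rcases eq_or_lt_of_le hj with h' | h'
      · subst h'; exact le_max_right _ _
      · exact (ih j (Nat.lt_succ_iff.1 h') t).trans (le_max_left _ _)
  have hF0 : ∀ M t, 0 ≤ F M t := fun M t => (h_nonneg 0 t).trans (hhF M 0 (Nat.zero_le _) t)
  have hFle : ∀ M t, F M t ≤ f t := by
    intro M
    induction M with
    | zero => intro t; exact le_ciSup (hbdd t) 0
    | succ M ih => intro t; exact max_le (ih t) (le_ciSup (hbdd t) (M + 1))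
  have hFge : ∀ M t, f t ≤ F M t + 1 / (M + 2) := by
    intro M t
    apply ciSup_le
    intro j
    rcases le_or_gt j M with hj | hj
    · have := hhF M j hj t
      have : h j t ≤ F M t := this
      have h2 : (0:ℝ) ≤ 1 / (M + 2) := by positivity
      linarith
    · have : h j t ≤ 1 / (j + 1) := h_le j t
      have h2 : (1:ℝ) / (j + 1) ≤ 1 / (M + 2) := by
        apply one_div_le_one_div_of_le (by positivity)
        have : (M:ℝ) + 1 ≤ j := by exact_mod_cast hj
        linarith
      linarith [hF0 M t]
  have hunif : TendstoUniformly F f atTop := by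
    rw [Metric.tendstoUniformly_iff]
    intro ε hε
    obtain ⟨M0, hM0⟩ : ∃ M0 : ℕ, 1 / ((M0:ℝ) + 2) < ε := by
      obtain ⟨M0, hM0⟩ := exists_nat_gt (1 / ε)
      refine ⟨M0, ?_⟩
      rw [div_lt_iff₀ (by positivity)]
      rw [div_lt_iff₀ hε] at hM0
      nlinarith [hε]
    filter_upwards [eventually_ge_atTop M0] with M hM t
    rw [Real.dist_eq, abs_of_nonneg (by linarith [hFle M t])]
    have : (1:ℝ) / (M + 2) ≤ 1 / (M0 + 2) := by
      apply one_div_le_one_div_of_le (by positivity)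
      have : (M0:ℝ) ≤ M := by exact_mod_cast hM
      linarith
    linarith [hFge M t]
  have hfcont : Continuous f := hunif.continuous (Eventually.of_forall hFcont).frequently
  exact ⟨f, hfcont, HasCompactSupport.intro isCompact_Icc key3, key2, key1⟩

/-- Vague convergence is not metrizable on the space of all finite signed Borel
measures on `ℝ`. -/
theorem stmt6 :
    ¬ ∃ d : SignedMeasure ℝ → SignedMeasure ℝ → ℝ,
      (∀ a b, 0 ≤ d a b) ∧
      (∀ a b, d a b = d b a) ∧
      (∀ a b, d a b = 0 ↔ a = b) ∧
      (∀ a b c, d a c ≤ d a b + d b c) ∧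
      (∀ (μ : ℕ → SignedMeasure ℝ) (ν : SignedMeasure ℝ),
        Tendsto (fun n => d (μ n) ν) atTop (nhds 0) ↔ VagueConv μ ν) := by
  rintro ⟨d, hd0, -, -, -, hiff⟩
  set S : ℕ → ℕ → SignedMeasure ℝ :=
    fun m n => (jd ((m : NNReal) + 1) (1/(n+1)) (hpt_aux n)).toSignedMeasure with hS_def
  have hvag : ∀ m, VagueConv (S m) 0 := fun m => vague_S _
  have hdS : ∀ m, Tendsto (fun n => d (S m n) 0) atTop (nhds 0) :=
    fun m => (hiff _ _).2 (hvag m)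
  have hN : ∀ m : ℕ, ∃ N, ∀ n ≥ N, d (S m n) 0 < 1/(m+1) := by
    intro m
    have hev := (hdS m).eventually (gt_mem_nhds (by positivity : (0:ℝ) < 1/(m+1)))
    exact eventually_atTop.1 hev
  choose N hNs using hN
  set k : ℕ → ℕ := fun m => Nat.rec (N 0) (fun m ih => max (N (m+1)) (ih+1)) m with hk_def
  have hk1 : ∀ m, N m ≤ k m := by
    intro m
    cases m with
    | zero => exact le_refl _
    | succ m => exact le_max_left _ _
  have hk2 : ∀ m, k m < k (m+1) :=
    fun m => lt_of_lt_of_le (Nat.lt_succ_self _) (le_max_right _ _)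
  have hkmono : StrictMono k := strictMono_nat_of_lt_succ hk2
  set x : ℕ → ℝ := fun m => 1/(k m + 1) with hx_def
  have hxpos : ∀ m, 0 < x m := fun m => by positivity
  have hxanti : StrictAnti x := by
    intro a b hab
    apply one_div_lt_one_div_of_lt (by positivity)
    have h := hkmono hab
    have : (k a : ℝ) < k b := by exact_mod_cast h
    linarith
  have hxle : ∀ m, x m ≤ 1 := by
    intro m
    rw [hx_def]
    rw [div_le_one (by positivity)]
    have : (0:ℝ) ≤ (k m : ℝ) := Nat.cast_nonneg _
    linarith
  obtain ⟨f, hfc, hfs, hf0, hfx⟩ := exists_f x hxpos hxanti hxle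
  have hdiag : Tendsto (fun m => d (S m (k m)) 0) atTop (nhds 0) := by
    apply squeeze_zero (fun m => hd0 _ _) (fun m => (hNs m (k m) (hk1 m)).le)
    exact tendsto_one_div_add_atTop_nhds_zero_nat
  have hconv := (hiff _ _).1 hdiag f hfc hfs
  have hval : ∀ m : ℕ, sintegral (S m (k m)) f = -1 := by
    intro m
    rw [hS_def]
    simp only []
    rw [sintegral_jd]
    have hxeq : (1:ℝ)/(k m + 1) = x m := rfl
    rw [hxeq, hf0, hfx m]
    have hm1 : ((m:ℝ) + 1) ≠ 0 := by positivity
    push_cast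
    field_simp
    ring
  rw [sintegral_zero] at hconv
  simp only [hval] at hconv
  have hbad := tendsto_nhds_unique hconv tendsto_const_nhds
  norm_num at hbad
end

section
/- The function d on W × W defined by d(f,g) = min{ε ≥ 0 : ∃ c ∈ ℝ such that λ({x ∈ [−1/ε, 1/ε] : |f(x) − c − g(x)| > ε}) ≤ ε} (with convention [−1/0, 1/0] = ℝ) is well-defined (the minimum is attained) and is a metric on W. -/
open MeasureTheory Filter Topology

/-- Right-continuity of a real function. -/
def RightCont (f : ℝ → ℝ) : Prop := ∀ x : ℝ, ContinuousWithinAt f (Set.Ici x) x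

/-- The space `W` of right-continuous functions of bounded variation on `ℝ`
which vanish at `-∞`. -/
def MemW (f : ℝ → ℝ) : Prop :=
  RightCont f ∧ BoundedVariationOn f Set.univ ∧ Tendsto f atBot (nhds 0)

/-- The set of admissible `ε ≥ 0` in the definition of the metric `d`: there is a
constant `c` such that `|f - c - g| ≤ ε` on `[-1/ε, 1/ε]` outside a set of Lebesgue
measure at most `ε` (with the convention `[-1/0, 1/0] = ℝ`). -/
def dSet (f g : ℝ → ℝ) : Set ℝ :=
  {ε : ℝ | 0 ≤ ε ∧ ∃ c : ℝ,
    volume {x : ℝ | x ∈ (if ε = 0 then Set.univ else Set.Icc (-ε⁻¹) ε⁻¹) ∧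
        ε < |f x - c - g x|} ≤ ENNReal.ofReal ε}

/-- The metric on `W` metrizing almost basic convergence. -/
noncomputable def dW (f g : ℝ → ℝ) : ℝ := sInf (dSet f g)

/-- Almost basic convergence: every subsequence has a further subsequence along
which the differences `f_n(x) - f_n(y)` converge to `f(x) - f(y)` for all `x, y`
outside a Lebesgue-null set that may depend on the subsequence. -/
def AlmBasic (F : ℕ → ℝ → ℝ) (f : ℝ → ℝ) : Prop :=
  ∀ φ : ℕ → ℕ, StrictMono φ → ∃ ψ : ℕ → ℕ, StrictMono ψ ∧ ∃ S : Set ℝ,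
    volume S = 0 ∧ ∀ x ∉ S, ∀ y ∉ S,
      Tendsto (fun l => F (φ (ψ l)) x - F (φ (ψ l)) y) atTop (nhds (f x - f y))

/-! ### Auxiliary lemmas -/

/-- Functions in `W` are bounded. -/
lemma memW_bounded {f : ℝ → ℝ} (hf : MemW f) : ∃ M : ℝ, 0 ≤ M ∧ ∀ x, |f x| ≤ M := by
  obtain ⟨-, hbv, hlim⟩ := hf
  obtain ⟨y, hy⟩ : ∃ y : ℝ, |f y| ≤ 1 := by
    have h1 : ∀ᶠ y in atBot, f y ∈ Metric.ball (0 : ℝ) 1 :=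
      hlim.eventually (Metric.ball_mem_nhds 0 one_pos)
    obtain ⟨y, hy⟩ := h1.exists
    refine ⟨y, ?_⟩
    have := Metric.mem_ball.1 hy
    rw [Real.dist_eq, sub_zero] at this
    exact this.le
  refine ⟨(eVariationOn f Set.univ).toReal + 1, by positivity, fun x => ?_⟩
  have h2 : dist (f x) (f y) ≤ (eVariationOn f Set.univ).toReal :=
    hbv.dist_le (Set.mem_univ x) (Set.mem_univ y)
  rw [Real.dist_eq] at h2
  calc |f x| = |(f x - f y) + f y| := by ring_nf
    _ ≤ |f x - f y| + |f y| := abs_add_le _ _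
    _ ≤ (eVariationOn f Set.univ).toReal + 1 := add_le_add h2 hy

lemma mem_dSet_of_sq {f g : ℝ → ℝ} {ε : ℝ} (h2 : 2 ≤ ε * ε) (hε : 0 < ε) :
    ε ∈ dSet f g := by
  refine ⟨hε.le, 0, ?_⟩
  rw [if_neg hε.ne']
  refine le_trans (measure_mono (fun x hx => hx.1)) ?_
  rw [Real.volume_Icc]
  apply ENNReal.ofReal_le_ofReal
  have h3 : ε⁻¹ - -ε⁻¹ = 2 / ε := by field_simp; ring
  rw [h3, div_le_iff₀ hε]
  exact h2

lemma two_mem_dSet (f g : ℝ → ℝ) : (2 : ℝ) ∈ dSet f g :=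
  mem_dSet_of_sq (by norm_num) two_pos

lemma dSet_bddBelow (f g : ℝ → ℝ) : BddBelow (dSet f g) :=
  ⟨0, fun _ hx => hx.1⟩

lemma dSet_nonempty (f g : ℝ → ℝ) : (dSet f g).Nonempty :=
  ⟨2, two_mem_dSet f g⟩

lemma dW_nonneg (f g : ℝ → ℝ) : 0 ≤ dW f g :=
  le_csInf (dSet_nonempty f g) fun _ hx => hx.1

/-- The infimum in the definition of `dW` is attained. -/
lemma dW_mem_dSet {f g : ℝ → ℝ} (hf : MemW f) (hg : MemW g) : dW f g ∈ dSet f g := by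
  classical
  set e := dW f g with hedef
  by_cases hmem : e ∈ dSet f g
  · exact hmem
  exfalso
  have hbdd := dSet_bddBelow f g
  have hne := dSet_nonempty f g
  have he0 : 0 ≤ e := dW_nonneg f g
  have he2 : e ≤ 2 := csInf_le hbdd (two_mem_dSet f g)
  have hsq : e * e < 2 := by
    by_contra hcon
    push_neg at hcon
    have hepos : 0 < e := by
      rcases he0.lt_or_eq with h' | h'
      · exact h'
      · rw [← h'] at hcon; norm_num at hcon
    exact hmem (mem_dSet_of_sq hcon hepos)
  set d0 : ℝ := min 1 ((2 - e * e) / 6) with hd0def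
  have hd0pos : 0 < d0 := lt_min one_pos (by nlinarith)
  have hd0sq : ∀ t : ℝ, 0 ≤ t → t ≤ e + d0 → t * t < 2 := by
    intro t ht hte
    have h1 : d0 ≤ 1 := min_le_left _ _
    have h2 : d0 ≤ (2 - e * e) / 6 := min_le_right _ _
    nlinarith
  have hsel : ∀ n : ℕ, ∃ x ∈ dSet f g, x < e + d0 / (n + 1) := by
    intro n
    apply exists_lt_of_csInf_lt hne
    have h1 : 0 < d0 / ((n : ℝ) + 1) := by positivity
    have h2 : sInf (dSet f g) = e := rfl
    linarith
  choose ε hεmem hεlt using hsel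
  have hεge : ∀ n, e ≤ ε n := fun n => csInf_le hbdd (hεmem n)
  have hεpos : ∀ n, 0 < ε n := by
    intro n
    rcases ((hεmem n).1).lt_or_eq with h | h
    · exact h
    · exfalso
      have heq : e = ε n := le_antisymm (hεge n) (by rw [← h]; exact he0)
      exact hmem (heq ▸ hεmem n)
  have hεle : ∀ n, ε n ≤ e + d0 := by
    intro n
    refine le_trans (hεlt n).le (add_le_add (le_refl e) ?_)
    apply div_le_self hd0pos.le
    have : (0 : ℝ) ≤ (n : ℝ) := Nat.cast_nonneg n
    linarith
  have hεsq : ∀ n, ε n * ε n < 2 := fun n => hd0sq _ (hεpos n).le (hεle n)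
  have hεlt2 : ∀ n, ε n ≤ 2 := by
    intro n
    nlinarith [hεsq n, hεpos n]
  have htend : Tendsto ε atTop (𝓝 e) := by
    have h1 : Tendsto (fun n : ℕ => e + d0 * (1 / ((n : ℝ) + 1))) atTop (𝓝 (e + d0 * 0)) :=
      tendsto_const_nhds.add (tendsto_one_div_add_atTop_nhds_zero_nat.const_mul d0)
    rw [mul_zero, add_zero] at h1
    refine tendsto_of_tendsto_of_tendsto_of_le_of_le tendsto_const_nhds h1 hεge fun n => ?_
    have := (hεlt n).le
    calc ε n ≤ e + d0 / (n + 1) := this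
      _ = e + d0 * (1 / ((n : ℝ) + 1)) := by ring
  choose c hc using fun n => (hεmem n).2
  obtain ⟨Mf, hMf0, hMf⟩ := memW_bounded hf
  obtain ⟨Mg, hMg0, hMg⟩ := memW_bounded hg
  set R : ℝ := Mf + Mg + 2 with hRdef
  have hcbdd : ∀ n, c n ∈ Set.Icc (-R) R := by
    intro n
    have hvol := hc n
    rw [if_neg (hεpos n).ne'] at hvol
    have hIcc : volume (Set.Icc (-(ε n)⁻¹) ((ε n)⁻¹)) = ENNReal.ofReal (2 / ε n) := by
      rw [Real.volume_Icc]
      congr 1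
      field_simp
      ring
    have hlt2 : ENNReal.ofReal (ε n) < volume (Set.Icc (-(ε n)⁻¹) ((ε n)⁻¹)) := by
      rw [hIcc]
      apply (ENNReal.ofReal_lt_ofReal_iff (div_pos two_pos (hεpos n))).2
      rw [lt_div_iff₀ (hεpos n)]
      exact hεsq n
    obtain ⟨x, hxI, hxB⟩ : ∃ x ∈ Set.Icc (-(ε n)⁻¹) ((ε n)⁻¹), ¬(ε n < |f x - c n - g x|) := by
      by_contra hcon
      push_neg at hcon
      have hsub : Set.Icc (-(ε n)⁻¹) ((ε n)⁻¹) ⊆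
          {x : ℝ | x ∈ Set.Icc (-(ε n)⁻¹) ((ε n)⁻¹) ∧ ε n < |f x - c n - g x|} :=
        fun x hx => ⟨hx, hcon x hx⟩
      exact absurd (le_trans (measure_mono hsub) hvol) (not_le.2 hlt2)
    push_neg at hxB
    have hcn : c n = (f x - g x) - (f x - c n - g x) := by ring
    have habs : |c n| ≤ |f x| + |g x| + ε n := by
      calc |c n| = |(f x - g x) - (f x - c n - g x)| := by rw [← hcn]
        _ ≤ |f x - g x| + |f x - c n - g x| := abs_sub _ _
        _ ≤ (|f x| + |g x|) + ε n := add_le_add (abs_sub _ _) hxB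
    have : |c n| ≤ R := by
      have := hMf x
      have := hMg x
      have := hεlt2 n
      rw [hRdef]
      linarith
    exact abs_le.1 this
  obtain ⟨c₀, -, φ, hφ, hcc⟩ := tendsto_subseq_of_bounded (Metric.isBounded_Icc (-R) R) hcbdd
  have htend' : Tendsto (fun n => ε (φ n)) atTop (𝓝 e) := htend.comp hφ.tendsto_atTop
  set B : ℕ → Set ℝ := fun n =>
    {x : ℝ | x ∈ Set.Icc (-(ε (φ n))⁻¹) ((ε (φ n))⁻¹) ∧ ε (φ n) < |f x - c (φ n) - g x|}
    with hBdef
  have hBvol : ∀ n, volume (B n) ≤ ENNReal.ofReal (ε (φ n)) := by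
    intro n
    have := hc (φ n)
    rwa [if_neg (hεpos (φ n)).ne'] at this
  have hpt : ∀ x : ℝ, (e = 0 ∨ |x| < e⁻¹) → e < |f x - c₀ - g x| →
      ∀ᶠ n in atTop, x ∈ B n := by
    intro x hx hlt
    have habs : Tendsto (fun n => |f x - c (φ n) - g x|) atTop (𝓝 |f x - c₀ - g x|) := by
      have h1 : Tendsto (fun n => f x - c (φ n) - g x) atTop (𝓝 (f x - c₀ - g x)) :=
        (tendsto_const_nhds.sub hcc).sub tendsto_const_nhds
      exact h1.abs
    have h1 : ∀ᶠ n in atTop, ε (φ n) < |f x - c (φ n) - g x| :=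
      htend'.eventually_lt habs hlt
    have h2 : ∀ᶠ n in atTop, |x| ≤ (ε (φ n))⁻¹ := by
      rcases hx with h0 | hlt'
      · have hinv : Tendsto (fun n => (ε (φ n))⁻¹) atTop atTop := by
          apply tendsto_inv_nhdsGT_zero.comp
          rw [tendsto_nhdsWithin_iff]
          exact ⟨h0 ▸ htend', Eventually.of_forall fun n => hεpos (φ n)⟩
        exact hinv.eventually_ge_atTop |x|
      · have hene : e ≠ 0 := by
          intro h
          rw [h, inv_zero] at hlt'
          exact absurd hlt' (not_lt.2 (abs_nonneg x))
        have hinv : Tendsto (fun n => (ε (φ n))⁻¹) atTop (𝓝 e⁻¹) := htend'.inv₀ hene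
        exact (tendsto_const_nhds.eventually_lt hinv hlt').mono fun n h => h.le
    filter_upwards [h1, h2] with n hn1 hn2
    exact ⟨abs_le.1 hn2, hn1⟩
  set C : ℕ → Set ℝ := fun n => ⋂ m, ⋂ (_ : n ≤ m), B m with hCdef
  have hCmono : Monotone C := by
    intro a b hab
    exact Set.iInter₂_mono' fun m hm => ⟨m, hab.trans hm, subset_rfl⟩
  have hCvol : ∀ n, volume (C n) ≤ ENNReal.ofReal e := by
    intro n
    apply ge_of_tendsto (ENNReal.tendsto_ofReal htend')
    filter_upwards [eventually_ge_atTop n] with m hm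
    exact le_trans (measure_mono (Set.biInter_subset_of_mem hm)) (hBvol m)
  have hUvol : volume (⋃ n, C n) ≤ ENNReal.ofReal e := by
    rw [hCmono.measure_iUnion]
    exact iSup_le hCvol
  apply hmem
  refine ⟨he0, c₀, ?_⟩
  have hsub : {x : ℝ | x ∈ (if e = 0 then Set.univ else Set.Icc (-e⁻¹) e⁻¹) ∧
      e < |f x - c₀ - g x|} ⊆ (⋃ n, C n) ∪ {-e⁻¹, e⁻¹} := by
    intro x hx
    by_cases hcase : e = 0 ∨ |x| < e⁻¹
    · left
      obtain ⟨n, hn⟩ := eventually_atTop.1 (hpt x hcase hx.2)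
      exact Set.mem_iUnion.2 ⟨n, Set.mem_iInter₂.2 hn⟩
    · right
      push_neg at hcase
      obtain ⟨hene, hxe⟩ := hcase
      have hxI : x ∈ Set.Icc (-e⁻¹) e⁻¹ := by
        have := hx.1
        rwa [if_neg hene] at this
      have hle : |x| ≤ e⁻¹ := abs_le.2 hxI
      have heq : |x| = e⁻¹ := le_antisymm hle hxe
      rcases abs_eq (le_trans (abs_nonneg x) hle) |>.1 heq with h | h
      · exact Or.inr h
      · exact Or.inl h
  calc volume {x : ℝ | x ∈ (if e = 0 then Set.univ else Set.Icc (-e⁻¹) e⁻¹) ∧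
        e < |f x - c₀ - g x|}
      ≤ volume ((⋃ n, C n) ∪ {-e⁻¹, e⁻¹}) := measure_mono hsub
    _ ≤ volume (⋃ n, C n) + volume ({-e⁻¹, e⁻¹} : Set ℝ) := measure_union_le _ _
    _ = volume (⋃ n, C n) := by
        have hz : volume ({-e⁻¹, e⁻¹} : Set ℝ) = 0 :=
          ((Set.finite_singleton e⁻¹).insert (-e⁻¹)).measure_zero volume
        rw [hz, add_zero]
    _ ≤ ENNReal.ofReal e := hUvol

lemma dSet_comm (f g : ℝ → ℝ) : dSet f g = dSet g f := by
  have key : ∀ u v : ℝ → ℝ, dSet u v ⊆ dSet v u := by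
    rintro u v ε ⟨h0, c, hc⟩
    refine ⟨h0, -c, ?_⟩
    have hseteq : {x : ℝ | x ∈ (if ε = 0 then Set.univ else Set.Icc (-ε⁻¹) ε⁻¹) ∧
        ε < |v x - -c - u x|} = {x : ℝ | x ∈ (if ε = 0 then Set.univ else Set.Icc (-ε⁻¹) ε⁻¹) ∧
        ε < |u x - c - v x|} := by
      ext x
      simp only [Set.mem_setOf_eq]
      rw [show v x - -c - u x = -(u x - c - v x) by ring, abs_neg]
    rw [hseteq]
    exact hc
  exact le_antisymm (key f g) (key g f)

lemma if_Icc_subset {a s : ℝ} (ha : 0 ≤ a) (has : a ≤ s) :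
    (if s = 0 then Set.univ else Set.Icc (-s⁻¹) s⁻¹ : Set ℝ) ⊆
      (if a = 0 then Set.univ else Set.Icc (-a⁻¹) a⁻¹) := by
  by_cases ha0 : a = 0
  · rw [if_pos ha0]
    exact Set.subset_univ _
  · have hapos : 0 < a := ha.lt_of_ne (Ne.symm ha0)
    have hspos : 0 < s := lt_of_lt_of_le hapos has
    rw [if_neg ha0, if_neg hspos.ne']
    have hinv : s⁻¹ ≤ a⁻¹ := inv_anti₀ hapos has
    exact Set.Icc_subset_Icc (neg_le_neg hinv) hinv

/-- The function `d(f,g) = min{ε ≥ 0 : ∃ c, λ({x ∈ [-1/ε,1/ε] : |f(x)-c-g(x)| > ε}) ≤ ε}`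
is well-defined (the minimum is attained) and is a metric on `W`. -/
theorem stmt8 :
    (∀ f g : ℝ → ℝ, MemW f → MemW g → dW f g ∈ dSet f g) ∧
    (∀ f g : ℝ → ℝ, MemW f → MemW g → (dW f g = 0 ↔ f = g)) ∧
    (∀ f g : ℝ → ℝ, MemW f → MemW g → dW f g = dW g f) ∧
    (∀ f g h : ℝ → ℝ, MemW f → MemW g → MemW h → dW f g ≤ dW f h + dW h g) := by
  refine ⟨fun f g hf hg => dW_mem_dSet hf hg, ?_, ?_, ?_⟩
  · -- identity of indiscernibles
    intro f g hf hg
    constructor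
    · intro h
      have hmem := dW_mem_dSet hf hg
      rw [h] at hmem
      obtain ⟨-, c, hc⟩ := hmem
      rw [if_pos rfl] at hc
      rw [ENNReal.ofReal_zero, nonpos_iff_eq_zero] at hc
      have hnull : volume {x : ℝ | f x - g x - c ≠ 0} = 0 := by
        have hseteq : {x : ℝ | f x - g x - c ≠ 0} =
            {x : ℝ | x ∈ (Set.univ : Set ℝ) ∧ 0 < |f x - c - g x|} := by
          ext x
          simp only [Set.mem_setOf_eq, Set.mem_univ, true_and, abs_pos]
          constructor
          · intro hx h0
            apply hx
            linarith [h0]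
          · intro hx h0
            apply hx
            linarith [h0]
        rw [hseteq]
        exact hc
      have hall : ∀ x, f x - g x = c := by
        by_contra hcon
        push_neg at hcon
        obtain ⟨x₀, hx₀⟩ := hcon
        have hrc : ContinuousWithinAt (fun x => f x - g x - c) (Set.Ici x₀) x₀ :=
          ((hf.1 x₀).sub (hg.1 x₀)).sub continuousWithinAt_const
        have hne : f x₀ - g x₀ - c ≠ 0 := sub_ne_zero.2 hx₀
        have hev : ∀ᶠ x in nhdsWithin x₀ (Set.Ici x₀), f x - g x - c ≠ 0 :=
          hrc (isOpen_compl_singleton.mem_nhds hne)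
        obtain ⟨u, hu, husub⟩ := mem_nhdsGE_iff_exists_Ico_subset.1 hev
        have hm : volume (Set.Ico x₀ u) ≤ 0 := by
          rw [← hnull]
          exact measure_mono husub
        rw [nonpos_iff_eq_zero, Real.volume_Ico] at hm
        have : u - x₀ ≤ 0 := by
          by_contra hc2
          push_neg at hc2
          rw [ENNReal.ofReal_eq_zero] at hm
          linarith
        have := hu
        rw [Set.mem_Ioi] at this
        linarith
      have hc0 : c = 0 := by
        have h1 : Tendsto (fun x => f x - g x) atBot (𝓝 (0 - 0)) := hf.2.2.sub hg.2.2
        have h2 : (fun x => f x - g x) = fun _ => c := funext hall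
        rw [h2] at h1
        have := tendsto_nhds_unique tendsto_const_nhds h1
        simpa using this
      funext x
      have := hall x
      rw [hc0] at this
      linarith
    · intro h
      subst h
      have h0 : (0 : ℝ) ∈ dSet f f := by
        refine ⟨le_refl 0, 0, ?_⟩
        have hempty : {x : ℝ | x ∈ (if (0:ℝ) = 0 then (Set.univ : Set ℝ)
            else Set.Icc (-(0:ℝ)⁻¹) (0:ℝ)⁻¹) ∧ (0:ℝ) < |f x - 0 - f x|} = ∅ := by
          ext x
          simp
        rw [hempty]
        simp
      exact le_antisymm (csInf_le (dSet_bddBelow f f) h0) (dW_nonneg f f)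
  · -- symmetry
    intro f g _ _
    unfold dW
    rw [dSet_comm]
  · -- triangle inequality
    intro f g h hf hg hh
    obtain ⟨ha0, c₁, hc₁⟩ := dW_mem_dSet hf hh
    obtain ⟨hb0, c₂, hc₂⟩ := dW_mem_dSet hh hg
    set a := dW f h with hadef
    set b := dW h g with hbdef
    have hab0 : 0 ≤ a + b := add_nonneg ha0 hb0
    apply csInf_le (dSet_bddBelow f g)
    refine ⟨hab0, c₁ + c₂, ?_⟩
    have hsubA := if_Icc_subset ha0 (le_add_of_nonneg_right hb0)
    have hsubB := if_Icc_subset hb0 (le_add_of_nonneg_left ha0)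
    have hbad : {x : ℝ | x ∈ (if a + b = 0 then Set.univ else Set.Icc (-(a+b)⁻¹) (a+b)⁻¹) ∧
          a + b < |f x - (c₁ + c₂) - g x|} ⊆
        {x : ℝ | x ∈ (if a = 0 then Set.univ else Set.Icc (-a⁻¹) a⁻¹) ∧
          a < |f x - c₁ - h x|} ∪
        {x : ℝ | x ∈ (if b = 0 then Set.univ else Set.Icc (-b⁻¹) b⁻¹) ∧
          b < |h x - c₂ - g x|} := by
      rintro x ⟨hxI, hxv⟩
      by_cases h1 : a < |f x - c₁ - h x|
      · exact Or.inl ⟨hsubA hxI, h1⟩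
      · push_neg at h1
        refine Or.inr ⟨hsubB hxI, ?_⟩
        by_contra h2
        push_neg at h2
        have h3 : |f x - (c₁ + c₂) - g x| ≤ a + b := by
          calc |f x - (c₁ + c₂) - g x|
              = |(f x - c₁ - h x) + (h x - c₂ - g x)| := by ring_nf
            _ ≤ |f x - c₁ - h x| + |h x - c₂ - g x| := abs_add_le _ _
            _ ≤ a + b := add_le_add h1 h2
        linarith
    calc volume {x : ℝ | x ∈ (if a + b = 0 then Set.univ
            else Set.Icc (-(a+b)⁻¹) (a+b)⁻¹) ∧ a + b < |f x - (c₁ + c₂) - g x|}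
        ≤ volume ({x : ℝ | x ∈ (if a = 0 then Set.univ else Set.Icc (-a⁻¹) a⁻¹) ∧
            a < |f x - c₁ - h x|} ∪
          {x : ℝ | x ∈ (if b = 0 then Set.univ else Set.Icc (-b⁻¹) b⁻¹) ∧
            b < |h x - c₂ - g x|}) := measure_mono hbad
      _ ≤ _ + _ := measure_union_le _ _
      _ ≤ ENNReal.ofReal a + ENNReal.ofReal b := add_le_add hc₁ hc₂
      _ = ENNReal.ofReal (a + b) := (ENNReal.ofReal_add ha0 hb0).symm
end

section
/- There exists no norm ‖·‖ on W such that ‖f_n − f‖ → 0 is equivalent to almost basic convergence of f_n to f. -/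
open MeasureTheory Filter

lemma evar_sub_le (f g : ℝ → ℝ) (s : Set ℝ) :
    eVariationOn (f - g) s ≤ eVariationOn f s + eVariationOn g s := by
  apply iSup_le
  rintro ⟨n, u, hu, us⟩
  calc ∑ i ∈ Finset.range n, edist ((f - g) (u (i + 1))) ((f - g) (u i))
      ≤ ∑ i ∈ Finset.range n,
        (edist (f (u (i + 1))) (f (u i)) + edist (g (u (i + 1))) (g (u i))) := by
        apply Finset.sum_le_sum
        intro i _
        simpa [sub_eq_add_neg, edist_neg_neg] using edist_add_add_le (f (u (i+1))) (-g (u (i+1))) (f (u i)) (-g (u i))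
    _ = (∑ i ∈ Finset.range n, edist (f (u (i + 1))) (f (u i)))
        + ∑ i ∈ Finset.range n, edist (g (u (i + 1))) (g (u i)) := Finset.sum_add_distrib
    _ ≤ _ := add_le_add (eVariationOn.sum_le (f := f) (n := n) hu us) (eVariationOn.sum_le (f := g) (n := n) hu us)

lemma bv_of_monotone_bdd {f : ℝ → ℝ} (hf : Monotone f) {M : ℝ}
    (h0 : ∀ x, 0 ≤ f x) (h1 : ∀ x, f x ≤ M) : BoundedVariationOn f Set.univ := by
  have : eVariationOn f Set.univ ≤ ENNReal.ofReal M := by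
    apply iSup_le
    rintro ⟨n, u, hu, -⟩
    have key : ∀ i, edist (f (u (i + 1))) (f (u i)) = ENNReal.ofReal (f (u (i+1)) - f (u i)) := by
      intro i
      rw [edist_dist, Real.dist_eq, abs_of_nonneg (sub_nonneg.2 (hf (hu (Nat.le_succ i))))]
    calc ∑ i ∈ Finset.range n, edist (f (u (i + 1))) (f (u i))
        = ENNReal.ofReal (∑ i ∈ Finset.range n, (f (u (i+1)) - f (u i))) := by
          rw [ENNReal.ofReal_sum_of_nonneg]
          · exact Finset.sum_congr rfl fun i _ => key i
          · intro i _; exact sub_nonneg.2 (hf (hu (Nat.le_succ i)))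
      _ = ENNReal.ofReal (f (u n) - f (u 0)) := by rw [Finset.sum_range_sub (fun i => f (u i)) n]
      _ ≤ ENNReal.ofReal M := ENNReal.ofReal_le_ofReal (by
          have := h0 (u 0); have := h1 (u n); linarith)
  exact ne_top_of_le_ne_top ENNReal.ofReal_ne_top this

/-- Step function: `c` on `[t, ∞)`, `0` below. -/
noncomputable def stepf (c t : ℝ) : ℝ → ℝ := fun x => if t ≤ x then c else 0

lemma rightCont_stepf (c t : ℝ) : RightCont (stepf c t) := by
  intro x
  by_cases h : t ≤ x
  · refine (continuousWithinAt_const (b := c)).congr (fun y hy => ?_) ?_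
    · simp [stepf, le_trans h hy]
    · simp [stepf, h]
  · refine (continuousWithinAt_const (b := (0:ℝ))).congr_of_eventuallyEq ?_ (by simp [stepf, h])
    have hx : x ∈ Set.Iio t := lt_of_not_ge h
    have : ∀ᶠ y in nhds x, y ∈ Set.Iio t := isOpen_Iio.eventually_mem hx
    filter_upwards [this.filter_mono nhdsWithin_le_nhds] with y hy
    simp [stepf, not_le.2 (Set.mem_Iio.1 hy)]

lemma memW_stepf (c t : ℝ) (hc : 0 ≤ c) : MemW (stepf c t) := by
  refine ⟨rightCont_stepf c t, ?_, ?_⟩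
  · refine bv_of_monotone_bdd (M := c) ?_ ?_ ?_
    · intro a b hab
      simp only [stepf]
      split_ifs with h1 h2 <;> first | rfl | linarith
    · intro x; simp only [stepf]; split_ifs <;> linarith
    · intro x; simp only [stepf]; split_ifs <;> linarith
  · have : ∀ᶠ x in atBot, stepf c t x = 0 := by
      filter_upwards [eventually_lt_atBot t] with x hx
      simp [stepf, not_le.2 hx]
    exact Tendsto.congr' (this.mono fun x hx => hx.symm) tendsto_const_nhds

lemma memW_sub {f g : ℝ → ℝ} (hf : MemW f) (hg : MemW g) : MemW (f - g) := by
  refine ⟨fun x => (hf.1 x).sub (hg.1 x), ?_, by have := hf.2.2.sub hg.2.2; rw [sub_zero] at this; exact this⟩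
  exact ne_top_of_le_ne_top (ENNReal.add_ne_top.2 ⟨hf.2.1, hg.2.1⟩) (evar_sub_le f g _)

lemma memW_zero : MemW 0 :=
  ⟨fun _ => continuousWithinAt_const, by
    simp only [BoundedVariationOn, eVariationOn.constant_on
      (show ((0 : ℝ → ℝ) '' Set.univ).Subsingleton by
        rintro a ⟨x, -, rfl⟩ b ⟨y, -, rfl⟩; rfl)]
    simp,
    tendsto_const_nhds⟩

/-- There exists no norm on `W` such that convergence in this norm is equivalent
to almost basic convergence. -/
theorem stmt10 :
    ¬ ∃ N : (ℝ → ℝ) → ℝ,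
      (∀ f : ℝ → ℝ, MemW f → 0 ≤ N f) ∧
      (∀ f : ℝ → ℝ, MemW f → (N f = 0 ↔ f = 0)) ∧
      (∀ (c : ℝ) (f : ℝ → ℝ), MemW f → N (c • f) = |c| * N f) ∧
      (∀ f g : ℝ → ℝ, MemW f → MemW g → N (f + g) ≤ N f + N g) ∧
      (∀ (F : ℕ → ℝ → ℝ) (f : ℝ → ℝ), (∀ n, MemW (F n)) → MemW f →
        (Tendsto (fun n => N (F n - f)) atTop (nhds 0) ↔ AlmBasic F f)) := by
  rintro ⟨N, hnn, hzero, hsmul, -, hconv⟩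
  set a : ℕ → ℝ := fun n => 1 / (n + 1) with ha_def
  have ha : ∀ n, 0 < a n := fun n => by positivity
  set g : ℕ → ℝ → ℝ := fun n => stepf 1 0 - stepf 1 (a n) with hg_def
  have hg : ∀ n, MemW (g n) :=
    fun n => memW_sub (memW_stepf 1 0 one_pos.le) (memW_stepf 1 (a n) one_pos.le)
  have hgne : ∀ n, g n ≠ 0 := by
    intro n h
    have := congrFun h 0
    simp [hg_def, stepf, not_le.2 (ha n)] at this
  have hNg : ∀ n, 0 < N (g n) := fun n =>
    lt_of_le_of_ne (hnn _ (hg n)) fun h => hgne n ((hzero _ (hg n)).1 h.symm)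
  set c : ℕ → ℝ := fun n => (N (g n))⁻¹ with hc_def
  have hc : ∀ n, 0 < c n := fun n => inv_pos.2 (hNg n)
  set F : ℕ → ℝ → ℝ := fun n => c n • g n with hF_def
  have hFeq : ∀ n, F n = stepf (c n) 0 - stepf (c n) (a n) := by
    intro n
    funext x
    simp only [hF_def, hg_def, Pi.smul_apply, Pi.sub_apply, smul_eq_mul, stepf]
    split_ifs <;> ring
  have hF : ∀ n, MemW (F n) := fun n => by
    rw [hFeq n]
    exact memW_sub (memW_stepf _ 0 (hc n).le) (memW_stepf _ (a n) (hc n).le)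
  -- value of F vanishes eventually away from 0
  have key : ∀ (φ : ℕ → ℕ), StrictMono φ → ∀ z : ℝ, z ≠ 0 →
      ∀ᶠ l in atTop, F (φ l) z = 0 := by
    intro φ hφ z hz
    rcases lt_or_gt_of_ne hz with hneg | hpos
    · refine Eventually.of_forall fun l => ?_
      rw [hFeq]
      simp [stepf, not_le.2 hneg, not_le.2 (lt_trans hneg (ha _))]
    · obtain ⟨M, hM⟩ := exists_nat_gt (1 / z)
      filter_upwards [eventually_ge_atTop M] with l hl
      have h1 : (1 : ℝ) / z < φ l + 1 := by
        have : (M : ℝ) ≤ φ l := by exact_mod_cast le_trans hl (hφ.le_apply)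
        linarith
      have h2 : a (φ l) ≤ z := by
        have h3 : (1:ℝ) < ((φ l : ℝ) + 1) * z := (div_lt_iff₀ hpos).1 h1
        have h4 : (1:ℝ) / ((φ l : ℝ) + 1) < z :=
          (div_lt_iff₀ (by positivity : (0:ℝ) < (φ l : ℝ) + 1)).2
            (by linarith : (1:ℝ) < z * ((φ l : ℝ) + 1))
        exact le_of_lt (by simpa [ha_def] using h4)
      rw [hFeq]
      simp [stepf, hpos.le, h2]
  -- AlmBasic F 0 holds
  have halm : AlmBasic F 0 := by
    intro φ hφ
    refine ⟨id, strictMono_id, {0}, Real.volume_singleton, ?_⟩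
    intro x hx y hy
    have hx' : x ≠ 0 := by simpa using hx
    have hy' : y ≠ 0 := by simpa using hy
    have : ∀ᶠ l in atTop, F (φ (id l)) x - F (φ (id l)) y = 0 := by
      filter_upwards [key φ hφ x hx', key φ hφ y hy'] with l h1 h2
      simp [h1, h2]
    have h0 : ((0 : ℝ → ℝ) x - (0 : ℝ → ℝ) y) = 0 := by simp
    rw [h0]
    exact Tendsto.congr' (this.mono fun l hl => hl.symm) tendsto_const_nhds
  -- the iff forces the constant sequence 1 to tend to 0
  have hten : Tendsto (fun n => N (F n - 0)) atTop (nhds 0) :=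
    (hconv F 0 hF memW_zero).2 halm
  have hone : ∀ n, N (F n - 0) = 1 := by
    intro n
    rw [sub_zero, hF_def]
    rw [hsmul (c n) (g n) (hg n), abs_of_pos (hc n), hc_def]
    exact inv_mul_cancel₀ (hNg n).ne'
  have : Tendsto (fun _ : ℕ => (1 : ℝ)) atTop (nhds 0) := by
    refine hten.congr fun n => hone n
  exact zero_ne_one (tendsto_nhds_unique this tendsto_const_nhds)
end

section
/- The metric space (W, d), where d is the almost-basic-convergence metric, is separable: the countable set of rational step functions {Σ_{i=1}^n c_i·1_{[a_i, b_i)} : n ∈ ℕ, a_i, b_i, c_i ∈ ℚ, a_i < b_i} is dense in (W, d). -/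
open MeasureTheory Filter

/-- Rational step functions: finite sums of rational multiples of indicator
functions of half-open intervals with rational endpoints. -/
def RatStep (g : ℝ → ℝ) : Prop :=
  ∃ (n : ℕ) (a b c : ℕ → ℚ), (∀ i < n, a i < b i) ∧
    g = fun x => ∑ i ∈ Finset.range n,
      (c i : ℝ) * Set.indicator (Set.Ico ((a i : ℝ)) ((b i : ℝ))) (fun _ => (1 : ℝ)) x

lemma telesc (f : ℝ → ℝ) (a : ℕ → ℝ) (ha : Monotone a) (N : ℕ) :
    ∑ i ∈ Finset.range N, eVariationOn f (Set.Icc (a i) (a (i+1)))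
      = eVariationOn f (Set.Icc (a 0) (a N)) := by
  induction N with
  | zero => simp [eVariationOn.subsingleton f (Set.subsingleton_Icc_of_ge le_rfl)]
  | succ n ih =>
      rw [Finset.sum_range_succ, ih]
      have := eVariationOn.Icc_add_Icc f (s := Set.univ)
        (ha (Nat.zero_le n)) (ha (Nat.le_succ n)) (Set.mem_univ (a n))
      simpa using this

/-- The metric space `(W, d)` is separable: the countable set of rational step
functions is dense in `(W, d)`. -/
theorem stmt11 (f : ℝ → ℝ) (hf : MemW f) (ε : ℝ) (hε : 0 < ε) :
    ∃ g : ℝ → ℝ, RatStep g ∧ dW f g < ε := by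
  obtain ⟨hrc, hbv, htd⟩ := hf
  set η := ε/2 with hηdef
  have hη0 : 0 < η := by positivity
  set V := (eVariationOn f Set.univ).toReal with hVdef
  have hV0 : 0 ≤ V := ENNReal.toReal_nonneg
  obtain ⟨K, hK⟩ := exists_rat_gt η⁻¹
  have hK0 : (0:ℝ) < K := lt_trans (by positivity) hK
  obtain ⟨q, hq0, hq1⟩ := exists_rat_btwn (show (0:ℝ) < η^2/(2*(V+1)) by positivity)
  have hq0' : (0:ℝ) < q := hq0
  obtain ⟨N, hN⟩ := exists_nat_ge ((2*K/q : ℚ) : ℝ)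
  have hNq : 2*(K:ℝ) ≤ N * q := by
    have he : ((2*K/q : ℚ) : ℝ) = 2*(K:ℝ)/q := by push_cast; ring
    rw [he, div_le_iff₀ hq0'] at hN
    linarith
  set a : ℕ → ℚ := fun i => -K + i*q with hadef
  have haR : ∀ i : ℕ, ((a i : ℚ) : ℝ) = -(K:ℝ) + i * q := by
    intro i; simp only [hadef]; push_cast; ring
  have hamono : Monotone (fun i => ((a i : ℚ) : ℝ)) := by
    intro i j hij
    simp only [haR]
    have : (i:ℝ) ≤ j := by exact_mod_cast hij
    nlinarith
  have hastep : ∀ i : ℕ, ((a (i+1) : ℚ) : ℝ) - ((a i : ℚ) : ℝ) = q := by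
    intro i; simp only [haR]; push_cast; ring
  have hcex : ∀ i : ℕ, ∃ r : ℚ, |f ((a i : ℚ) : ℝ) - r| < η/2 :=
    fun i => exists_rat_near _ (by positivity)
  choose c hc using hcex
  set g : ℝ → ℝ := fun x => ∑ i ∈ Finset.range N,
      (c i : ℝ) * Set.indicator (Set.Ico ((a i : ℝ)) ((a (i+1) : ℝ))) (fun _ => (1:ℝ)) x
    with hgdef
  have hRS : RatStep g := by
    refine ⟨N, a, fun i => a (i+1), c, fun i _ => ?_, rfl⟩
    have h1 := hastep i
    have h2 : ((a i : ℚ) : ℝ) < ((a (i+1) : ℚ) : ℝ) := by linarith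
    exact_mod_cast h2
  have hgval : ∀ i < N, ∀ x : ℝ, ((a i : ℚ):ℝ) ≤ x → x < ((a (i+1):ℚ):ℝ) → g x = c i := by
    intro i hi x hx1 hx2
    simp only [hgdef]
    rw [Finset.sum_eq_single_of_mem i (Finset.mem_range.2 hi)]
    · rw [Set.indicator_of_mem (show x ∈ Set.Ico ((a i:ℚ):ℝ) ((a (i+1):ℚ):ℝ) from ⟨hx1, hx2⟩)]; ring
    · intro j _ hji
      have hx : x ∉ Set.Ico ((a j : ℚ):ℝ) ((a (j+1):ℚ):ℝ) := by
        rcases lt_or_gt_of_ne hji with h | h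
        · intro hmem
          have hle : ((a (j+1):ℚ):ℝ) ≤ ((a i:ℚ):ℝ) := hamono h
          exact absurd hmem.2 (by linarith)
        · intro hmem
          have hle : ((a (i+1):ℚ):ℝ) ≤ ((a j:ℚ):ℝ) := hamono h
          exact absurd hmem.1 (by linarith)
      rw [Set.indicator_of_notMem hx]; ring
  have hcover : ∀ x : ℝ, x ∈ Set.Icc (-η⁻¹) η⁻¹ →
      ∃ i < N, ((a i : ℚ):ℝ) ≤ x ∧ x < ((a (i+1):ℚ):ℝ) := by
    intro x hx
    have hηi : (0:ℝ) < η⁻¹ := by positivity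
    have hx1 : -η⁻¹ ≤ x := hx.1
    have hx2 : x ≤ η⁻¹ := hx.2
    set t : ℝ := (x + K)/q with htdef
    have ht0 : 0 ≤ t := div_nonneg (by linarith) hq0'.le
    have hfl : (⌊t⌋₊:ℝ) ≤ t := Nat.floor_le ht0
    have hfl2 : t < (⌊t⌋₊:ℝ) + 1 := Nat.lt_floor_add_one t
    have htq : t * q = x + K := by
      rw [htdef]; field_simp
    refine ⟨⌊t⌋₊, ?_, ?_, ?_⟩
    · have hr : (⌊t⌋₊:ℝ) < N := by nlinarith
      exact_mod_cast hr
    · rw [haR]; nlinarith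
    · rw [haR]; push_cast; nlinarith
  have hgood : ∀ i, eVariationOn f (Set.Icc ((a i:ℚ):ℝ) ((a (i+1):ℚ):ℝ)) ≤ ENNReal.ofReal (η/2) →
      ∀ x ∈ Set.Icc ((a i:ℚ):ℝ) ((a (i+1):ℚ):ℝ), |f x - f ((a i:ℚ):ℝ)| ≤ η/2 := by
    intro i hi x hx
    have hmem : ((a i:ℚ):ℝ) ∈ Set.Icc ((a i:ℚ):ℝ) ((a (i+1):ℚ):ℝ) :=
      Set.left_mem_Icc.2 (hamono (Nat.le_succ i))
    have h1 := (eVariationOn.edist_le f hx hmem).trans hi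
    rw [edist_dist, ENNReal.ofReal_le_ofReal_iff (by positivity)] at h1
    rwa [Real.dist_eq] at h1
  set B : Finset ℕ := (Finset.range N).filter
    (fun i => ¬ eVariationOn f (Set.Icc ((a i:ℚ):ℝ) ((a (i+1):ℚ):ℝ)) ≤ ENNReal.ofReal (η/2))
    with hBdef
  have hcard : (B.card : ℝ) * (η/2) ≤ V := by
    have h1 : (B.card : ENNReal) * ENNReal.ofReal (η/2) ≤ eVariationOn f Set.univ := by
      calc (B.card : ENNReal) * ENNReal.ofReal (η/2)
          = ∑ _i ∈ B, ENNReal.ofReal (η/2) := by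
            rw [Finset.sum_const, nsmul_eq_mul]
        _ ≤ ∑ i ∈ B, eVariationOn f (Set.Icc ((a i:ℚ):ℝ) ((a (i+1):ℚ):ℝ)) := by
            refine Finset.sum_le_sum fun i hi => ?_
            exact le_of_lt (not_le.1 (Finset.mem_filter.1 hi).2)
        _ ≤ ∑ i ∈ Finset.range N, eVariationOn f (Set.Icc ((a i:ℚ):ℝ) ((a (i+1):ℚ):ℝ)) :=
            Finset.sum_le_sum_of_subset (Finset.filter_subset _ _)
        _ = eVariationOn f (Set.Icc ((a 0:ℚ):ℝ) ((a N:ℚ):ℝ)) := by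
            simpa using telesc f (fun i => ((a i:ℚ):ℝ)) hamono N
        _ ≤ eVariationOn f Set.univ := eVariationOn.mono f (Set.subset_univ _)
    have h2 : ENNReal.ofReal ((B.card:ℝ) * (η/2)) ≤ eVariationOn f Set.univ := by
      rw [ENNReal.ofReal_mul (Nat.cast_nonneg _), ENNReal.ofReal_natCast]
      exact h1
    exact (ENNReal.ofReal_le_iff_le_toReal hbv).1 h2
  have hBq : (B.card : ℝ) * q ≤ η := by
    have hc0 : (0:ℝ) ≤ B.card := Nat.cast_nonneg _
    have h3 : (B.card:ℝ) * q ≤ (B.card:ℝ) * (η^2/(2*(V+1))) :=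
      mul_le_mul_of_nonneg_left hq1.le hc0
    have h4 : (B.card:ℝ) * (η^2/(2*(V+1))) = ((B.card:ℝ)*(η/2)) * (η/(V+1)) := by
      have hV1 : V + 1 ≠ 0 := by positivity
      field_simp
    have h5 : ((B.card:ℝ)*(η/2)) * (η/(V+1)) ≤ V * (η/(V+1)) :=
      mul_le_mul_of_nonneg_right hcard (by positivity)
    have h7 : V * (η/(V+1)) ≤ (V+1) * (η/(V+1)) := by
      have : (0:ℝ) ≤ η/(V+1) := by positivity
      nlinarith
    have h8 : (V+1) * (η/(V+1)) = η := by field_simp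
    linarith
  have hmemd : η ∈ dSet f g := by
    simp only [dSet, Set.mem_setOf_eq, if_neg hη0.ne']
    refine ⟨hη0.le, 0, ?_⟩
    have hsub : {x : ℝ | x ∈ Set.Icc (-η⁻¹) η⁻¹ ∧ η < |f x - 0 - g x|}
        ⊆ ⋃ i ∈ B, Set.Ico ((a i:ℚ):ℝ) ((a (i+1):ℚ):ℝ) := by
      intro x hx
      obtain ⟨i, hiN, hxi1, hxi2⟩ := hcover x hx.1
      have hiB : i ∈ B := by
        rw [hBdef, Finset.mem_filter]
        refine ⟨Finset.mem_range.2 hiN, fun hle => ?_⟩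
        have h1 := hgood i hle x ⟨hxi1, hxi2.le⟩
        have h2 := hc i
        have h3 := hgval i hiN x hxi1 hxi2
        have h4 : |f x - 0 - g x| < η := by
          rw [h3]
          have he : f x - 0 - (c i:ℝ)
              = (f x - f ((a i:ℚ):ℝ)) + (f ((a i:ℚ):ℝ) - (c i:ℝ)) := by ring
          rw [he]
          have habs := abs_add_le (f x - f ((a i:ℚ):ℝ)) (f ((a i:ℚ):ℝ) - (c i:ℝ))
          linarith
        exact absurd hx.2 (by linarith)
      exact Set.mem_biUnion hiB ⟨hxi1, hxi2⟩
    calc volume {x : ℝ | x ∈ Set.Icc (-η⁻¹) η⁻¹ ∧ η < |f x - 0 - g x|}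
        ≤ volume (⋃ i ∈ B, Set.Ico ((a i:ℚ):ℝ) ((a (i+1):ℚ):ℝ)) := measure_mono hsub
      _ ≤ ∑ i ∈ B, volume (Set.Ico ((a i:ℚ):ℝ) ((a (i+1):ℚ):ℝ)) :=
          measure_biUnion_finset_le _ _
      _ = ∑ _i ∈ B, ENNReal.ofReal q := by
          refine Finset.sum_congr rfl fun i _ => ?_
          rw [Real.volume_Ico, hastep i]
      _ = (B.card : ENNReal) * ENNReal.ofReal q := by
          rw [Finset.sum_const, nsmul_eq_mul]
      _ = ENNReal.ofReal ((B.card:ℝ) * q) := by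
          rw [ENNReal.ofReal_mul (Nat.cast_nonneg _), ENNReal.ofReal_natCast]
      _ ≤ ENNReal.ofReal η := ENNReal.ofReal_le_ofReal hBq
  have hdle : dW f g ≤ η := csInf_le ⟨0, fun y hy => hy.1⟩ hmemd
  exact ⟨g, hRS, lt_of_le_of_lt hdle (by rw [hηdef]; linarith)⟩
end

section
/- Let f_n, f ∈ W. Then f_n converges almost basically to f if and only if there exists a sequence (c_n) of real numbers such that f_n − c_n converges to f locally in Lebesgue measure, i.e., for all ε > 0 and r > 0, λ({x ∈ [−r, r] : |f_n(x) − c_n − f(x)| > ε}) → 0 as n → ∞. -/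
open MeasureTheory Filter

open scoped ENNReal Topology

lemma memW_measurable {f : ℝ → ℝ} (h : MemW f) : Measurable f := by
  obtain ⟨p, q, hp, hq, hpq⟩ :=
    LocallyBoundedVariationOn.exists_monotoneOn_sub_monotoneOn
      (fun a b _ _ => h.2.1.mono Set.inter_subset_left)
  rw [hpq]
  exact ((monotoneOn_univ.mp hp).measurable).sub ((monotoneOn_univ.mp hq).measurable)

/-- A median of `g` on `[0,1]`. -/
noncomputable def med (g : ℝ → ℝ) : ℝ :=
  sInf {t : ℝ | 1/2 ≤ volume {x : ℝ | x ∈ Set.Icc (0:ℝ) 1 ∧ g x ≤ t}}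

lemma med_close {g : ℝ → ℝ} {v ε : ℝ}
    (h : volume {x : ℝ | x ∈ Set.Icc (0:ℝ) 1 ∧ ε < |g x - v|} < 1/2) :
    |med g - v| ≤ ε := by
  set T := {t : ℝ | 1/2 ≤ volume {x : ℝ | x ∈ Set.Icc (0:ℝ) 1 ∧ g x ≤ t}} with hT
  have hA : (1/2 : ℝ≥0∞) ≤ volume {x : ℝ | x ∈ Set.Icc (0:ℝ) 1 ∧ |g x - v| ≤ ε} := by
    by_contra hcon
    push_neg at hcon
    have hsub : Set.Icc (0:ℝ) 1 ⊆ {x : ℝ | x ∈ Set.Icc (0:ℝ) 1 ∧ |g x - v| ≤ ε} ∪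
        {x : ℝ | x ∈ Set.Icc (0:ℝ) 1 ∧ ε < |g x - v|} := by
      intro x hx
      rcases le_or_gt (|g x - v|) ε with h1 | h1
      · exact Or.inl ⟨hx, h1⟩
      · exact Or.inr ⟨hx, h1⟩
    have h1 : (1 : ℝ≥0∞) ≤ volume {x : ℝ | x ∈ Set.Icc (0:ℝ) 1 ∧ |g x - v| ≤ ε} +
        volume {x : ℝ | x ∈ Set.Icc (0:ℝ) 1 ∧ ε < |g x - v|} := by
      calc (1 : ℝ≥0∞) = volume (Set.Icc (0:ℝ) 1) := by simp [Real.volume_Icc]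
        _ ≤ _ := (measure_mono hsub).trans (measure_union_le _ _)
    have h2 := ENNReal.add_lt_add hcon h
    rw [ENNReal.add_halves] at h2
    exact absurd h1 (not_le.mpr h2)
  have hmemT : v + ε ∈ T := by
    refine hA.trans (measure_mono ?_)
    rintro x ⟨hx, hx2⟩
    exact ⟨hx, by linarith [(abs_le.mp hx2).2]⟩
  have hlb : ∀ t ∈ T, v - ε ≤ t := by
    intro t ht
    by_contra h'
    push_neg at h'
    have hsub : {x : ℝ | x ∈ Set.Icc (0:ℝ) 1 ∧ g x ≤ t} ⊆
        {x : ℝ | x ∈ Set.Icc (0:ℝ) 1 ∧ ε < |g x - v|} := by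
      rintro x ⟨hx, hx2⟩
      refine ⟨hx, lt_of_lt_of_le ?_ (neg_le_abs _)⟩
      linarith
    exact absurd (ht.trans (measure_mono hsub)) (not_le.mpr h)
  have h1 : med g ≤ v + ε := csInf_le ⟨v - ε, hlb⟩ hmemT
  have h2 : v - ε ≤ med g := le_csInf ⟨v + ε, hmemT⟩ hlb
  exact abs_le.mpr ⟨by linarith, by linarith⟩

lemma isFiniteRestrictIcc (a b : ℝ) : IsFiniteMeasure (volume.restrict (Set.Icc a b)) :=
  ⟨by rw [Measure.restrict_apply_univ]; exact measure_Icc_lt_top⟩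

/-- For `f_n, f ∈ W`: `f_n` converges almost basically to `f` if and only if there
is a sequence `(c_n)` of reals such that `f_n - c_n → f` locally in Lebesgue
measure. -/
theorem stmt13 (F : ℕ → ℝ → ℝ) (f : ℝ → ℝ) (hF : ∀ n, MemW (F n)) (hf : MemW f) :
    AlmBasic F f ↔ ∃ c : ℕ → ℝ, ∀ ε : ℝ, 0 < ε → ∀ r : ℝ, 0 < r →
      Tendsto
        (fun n => volume {x : ℝ | x ∈ Set.Icc (-r) r ∧ ε < |F n x - c n - f x|})
        atTop (nhds 0) := by
  constructor
  · -- almost basic convergence implies local convergence in measure after centering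
    intro hAB
    have hFm : ∀ n, Measurable (F n) := fun n => memW_measurable (hF n)
    have hfm : Measurable f := memW_measurable hf
    refine ⟨fun n => med (fun x => F n x - f x), ?_⟩
    intro ε hε r hr
    apply tendsto_of_subseq_tendsto
    intro ns hns
    obtain ⟨ms, hms, hnsms⟩ := strictMono_subseq_of_tendsto_atTop hns
    obtain ⟨ψ, hψ, S, hS0, hS⟩ := hAB (ns ∘ ms) hnsms
    refine ⟨ms ∘ ψ, ?_⟩
    set c : ℕ → ℝ := fun n => med (fun x => F n x - f x) with hcdef
    set m : ℕ → ℕ := fun l => ns (ms (ψ l)) with hm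
    show Tendsto (fun l => volume {x : ℝ | x ∈ Set.Icc (-r) r ∧ ε < |F (m l) x - c (m l) - f x|})
      atTop (𝓝 0)
    -- pick a good point y
    have hSne : Sᶜ.Nonempty := by
      by_contra h
      rw [Set.not_nonempty_iff_eq_empty, Set.compl_empty_iff] at h
      rw [h] at hS0
      simp [Real.volume_univ] at hS0
    obtain ⟨y, hy⟩ := hSne
    -- pointwise convergence of centered differences
    have hpt : ∀ x ∉ S, Tendsto (fun l => (F (m l) x - f x) - (F (m l) y - f y)) atTop (𝓝 0) := by
      intro x hx
      have h1 := (hS x hx y hy).sub_const (f x - f y)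
      rw [sub_self] at h1
      exact Tendsto.congr (fun l => by simp only [hm, Function.comp_apply]; ring) h1
    -- convergence in measure on [0,1] of these
    have h01 : IsFiniteMeasure (volume.restrict (Set.Icc (0:ℝ) 1)) := isFiniteRestrictIcc 0 1
    have hmeas1 : ∀ l : ℕ, Measurable fun x => (F (m l) x - f x) - (F (m l) y - f y) :=
      fun l => ((hFm (m l)).sub hfm).sub measurable_const
    have hae1 : ∀ᵐ x ∂(volume.restrict (Set.Icc (0:ℝ) 1)),
        Tendsto (fun l => (F (m l) x - f x) - (F (m l) y - f y)) atTop (𝓝 0) := by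
      refine ae_restrict_of_ae ?_
      refine measure_mono_null (fun x hx => ?_) hS0
      by_contra hxS
      exact hx (hpt x hxS)
    have htim1 : TendstoInMeasure (volume.restrict (Set.Icc (0:ℝ) 1))
        (fun l x => (F (m l) x - f x) - (F (m l) y - f y)) atTop (fun _ => 0) :=
      tendstoInMeasure_of_tendsto_ae (fun l => (hmeas1 l).aestronglyMeasurable) hae1
    -- the medians track F (m l) y - f y
    have hcy : Tendsto (fun l => c (m l) - (F (m l) y - f y)) atTop (𝓝 0) := by
      rw [NormedAddCommGroup.tendsto_nhds_zero]
      intro ε' hε'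
      have h2 := tendstoInMeasure_iff_dist.mp htim1 (ε'/2) (half_pos hε')
      have h3 := h2.eventually_lt_const (by norm_num : (0:ℝ≥0∞) < 1/2)
      filter_upwards [h3] with l hl
      have hsub : volume {x : ℝ | x ∈ Set.Icc (0:ℝ) 1 ∧
          ε'/2 < |(fun x => F (m l) x - f x) x - (F (m l) y - f y)|} < 1/2 := by
        refine lt_of_le_of_lt ?_ hl
        have hBmeas : MeasurableSet {x : ℝ | ε'/2 ≤ dist ((F (m l) x - f x) - (F (m l) y - f y)) 0} :=
          measurableSet_le measurable_const ((hmeas1 l).dist measurable_const)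
        rw [Measure.restrict_apply hBmeas]
        refine measure_mono ?_
        rintro x ⟨hxI, hx2⟩
        refine ⟨?_, hxI⟩
        simp only [Set.mem_setOf_eq, Real.dist_eq, sub_zero]
        exact le_of_lt hx2
      have := med_close (g := fun x => F (m l) x - f x) (v := F (m l) y - f y) hsub
      have h4 : ‖c (m l) - (F (m l) y - f y)‖ ≤ ε'/2 := by
        simpa [hcdef, Real.norm_eq_abs] using this
      linarith
    -- pointwise convergence of F (m l) x - c (m l) to f x off S
    have hx0 : ∀ x ∉ S, Tendsto (fun l => F (m l) x - c (m l)) atTop (𝓝 (f x)) := by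
      intro x hx
      rw [← tendsto_sub_nhds_zero_iff]
      have h1 := (hpt x hx).sub hcy
      rw [sub_zero] at h1
      exact Tendsto.congr (fun l => by ring) h1
    -- conclude convergence in measure on [-r, r]
    have hr1 : IsFiniteMeasure (volume.restrict (Set.Icc (-r) r)) := isFiniteRestrictIcc (-r) r
    have hmeas2 : ∀ l : ℕ, Measurable fun x => F (m l) x - c (m l) :=
      fun l => (hFm (m l)).sub measurable_const
    have hae2 : ∀ᵐ x ∂(volume.restrict (Set.Icc (-r) r)),
        Tendsto (fun l => F (m l) x - c (m l)) atTop (𝓝 (f x)) := by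
      refine ae_restrict_of_ae ?_
      refine measure_mono_null (fun x hx => ?_) hS0
      by_contra hxS
      exact hx (hx0 x hxS)
    have htim2 : TendstoInMeasure (volume.restrict (Set.Icc (-r) r))
        (fun l x => F (m l) x - c (m l)) atTop f :=
      tendstoInMeasure_of_tendsto_ae (fun l => (hmeas2 l).aestronglyMeasurable) hae2
    have h5 := tendstoInMeasure_iff_dist.mp htim2 ε hε
    refine tendsto_of_tendsto_of_tendsto_of_le_of_le tendsto_const_nhds h5
      (fun l => zero_le) (fun l => ?_)
    have hBmeas : MeasurableSet {x : ℝ | ε ≤ dist (F (m l) x - c (m l)) (f x)} :=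
      measurableSet_le measurable_const (((hFm (m l)).sub measurable_const).dist hfm)
    rw [Measure.restrict_apply hBmeas]
    refine measure_mono ?_
    rintro x ⟨hxI, hx2⟩
    refine ⟨?_, hxI⟩
    simp only [Set.mem_setOf_eq, Real.dist_eq]
    rw [sub_sub]
    rw [sub_sub] at hx2
    exact le_of_lt hx2
  · -- local convergence in measure after centering implies almost basic convergence
    rintro ⟨c, hc⟩
    intro φ hφ
    have hFm : ∀ n, Measurable (F n) := fun n => memW_measurable (hF n)
    have hfm : Measurable f := memW_measurable hf
    set w : ℝ → ℝ≥0∞ := fun x => ENNReal.ofReal (Real.exp (-1 * x ^ 2)) with hw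
    have hwmeas : Measurable w :=
      (Real.continuous_exp.comp (continuous_const.mul (continuous_pow 2))).measurable.ennreal_ofReal
    set μ : Measure ℝ := volume.withDensity w with hμ
    have hμfin : IsFiniteMeasure μ := by
      constructor
      rw [hμ, withDensity_apply _ MeasurableSet.univ, Measure.restrict_univ]
      have hint := integrable_exp_neg_mul_sq (b := 1) one_pos
      calc ∫⁻ x, w x ≤ ∫⁻ x, (‖Real.exp (-1 * x ^ 2)‖₊ : ℝ≥0∞) := by
            refine lintegral_mono fun x => ?_
            rw [hw]
            simp [Real.enorm_eq_ofReal (Real.exp_pos _).le]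
        _ < ⊤ := hint.hasFiniteIntegral
    have hμle : ∀ {B : Set ℝ}, MeasurableSet B → μ B ≤ volume B := by
      intro B hB
      rw [hμ, withDensity_apply _ hB]
      calc ∫⁻ x in B, w x ≤ ∫⁻ _ in B, 1 := by
            refine lintegral_mono fun x => ?_
            exact ENNReal.ofReal_le_one.mpr (Real.exp_le_one_iff.mpr (by nlinarith [sq_nonneg x]))
        _ = volume B := by simp
    have hμ0 : ∀ {S : Set ℝ}, μ S = 0 → volume S = 0 := by
      intro S hS
      obtain ⟨S', hSS', hS'm, hS'0⟩ := exists_measurable_superset_of_null hS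
      have := (withDensity_apply_eq_zero (f := w) hwmeas).mp hS'0
      have hw0 : {x : ℝ | w x ≠ 0} = Set.univ := by
        ext x
        simp [hw, ENNReal.ofReal_eq_zero, not_le, Real.exp_pos]
      rw [hw0, Set.univ_inter] at this
      exact measure_mono_null hSS' this
    -- tail
    have htail : Tendsto (fun K : ℕ => μ (Set.Icc (-(K:ℝ)) K)ᶜ) atTop (𝓝 0) := by
      have h1 : Tendsto (fun K : ℕ => μ (Set.Icc (-(K:ℝ)) K)ᶜ) atTop
          (𝓝 (μ (⋂ K : ℕ, (Set.Icc (-(K:ℝ)) K)ᶜ))) := by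
        refine tendsto_measure_iInter_atTop
          (fun K => (measurableSet_Icc.compl).nullMeasurableSet) ?_ ⟨0, measure_ne_top μ _⟩
        intro i j hij
        exact Set.compl_subset_compl.mpr
          (Set.Icc_subset_Icc (by simp; exact_mod_cast hij) (by exact_mod_cast hij))
      have h2 : (⋂ K : ℕ, (Set.Icc (-(K:ℝ)) K)ᶜ) = ∅ := by
        rw [← Set.compl_iUnion, Set.compl_empty_iff]
        ext x
        simp only [Set.mem_iUnion, Set.mem_Icc, Set.mem_univ, iff_true]
        obtain ⟨K, hK⟩ := exists_nat_ge |x|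
        exact ⟨K, neg_le_of_abs_le hK, le_of_abs_le hK⟩
      rw [h2] at h1
      simpa using h1
    have htm : TendstoInMeasure μ (fun n x => F (φ n) x - c (φ n)) atTop f := by
      rw [tendstoInMeasure_iff_dist]
      intro ε hε
      rw [ENNReal.tendsto_nhds_zero]
      intro δ hδ
      obtain ⟨K, hK1, hKtail⟩ := ((eventually_ge_atTop 1).and
        (ENNReal.tendsto_nhds_zero.mp htail (δ / 2) (ENNReal.half_pos hδ.ne'))).exists
      have hKpos : (0:ℝ) < (K:ℝ) := by
        have : (1:ℝ) ≤ (K:ℝ) := by exact_mod_cast hK1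
        linarith
      have hvol := (hc (ε/2) (half_pos hε) K hKpos).comp hφ.tendsto_atTop
      filter_upwards [ENNReal.tendsto_nhds_zero.mp hvol (δ/2) (ENNReal.half_pos hδ.ne')]
        with n hn
      set D := {x : ℝ | ε ≤ dist (F (φ n) x - c (φ n)) (f x)} with hD
      have hDmeas : MeasurableSet D :=
        measurableSet_le measurable_const (((hFm (φ n)).sub measurable_const).dist hfm)
      have hsub : D ⊆ (D ∩ Set.Icc (-(K:ℝ)) K) ∪ (Set.Icc (-(K:ℝ)) K)ᶜ := fun x hx => by
        by_cases hxI : x ∈ Set.Icc (-(K:ℝ)) K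
        · exact Or.inl ⟨hx, hxI⟩
        · exact Or.inr hxI
      have hstep : μ (D ∩ Set.Icc (-(K:ℝ)) K) ≤ δ/2 := by
        refine le_trans (hμle (hDmeas.inter measurableSet_Icc)) (le_trans (measure_mono ?_) hn)
        rintro x ⟨hxD, hxI⟩
        refine ⟨hxI, ?_⟩
        have : ε ≤ |F (φ n) x - c (φ n) - f x| := by
          rw [hD, Set.mem_setOf_eq, Real.dist_eq, sub_sub] at hxD
          rwa [sub_sub]
        linarith
      calc μ D ≤ μ (D ∩ Set.Icc (-(K:ℝ)) K) + μ (Set.Icc (-(K:ℝ)) K)ᶜ :=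
            (measure_mono hsub).trans (measure_union_le _ _)
        _ ≤ δ/2 + δ/2 := add_le_add hstep hKtail
        _ = δ := ENNReal.add_halves δ
    obtain ⟨ψ, hψ, hae⟩ := htm.exists_seq_tendsto_ae
    refine ⟨ψ, hψ, {x | ¬ Tendsto (fun i => F (φ (ψ i)) x - c (φ (ψ i))) atTop (𝓝 (f x))},
      hμ0 (ae_iff.mp hae), ?_⟩
    intro x hx y hy
    have hx' : Tendsto (fun i => F (φ (ψ i)) x - c (φ (ψ i))) atTop (𝓝 (f x)) := by
      simpa using hx
    have hy' : Tendsto (fun i => F (φ (ψ i)) y - c (φ (ψ i))) atTop (𝓝 (f y)) := by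
      simpa using hy
    exact Tendsto.congr (fun l => by ring) (hx'.sub hy')
end

section
/- Let f_n, f ∈ W. Then f_n converges almost basically to f if and only if there exists a sequence (c_n) of reals such that every subsequence of (f_n) has a further subsequence (f_{n_{k_l}}) and a Lebesgue-null set S with f_{n_{k_l}}(x) − c_{n_{k_l}} → f(x) for all x ∈ ℝ \ S. -/
open MeasureTheory Filter
open scoped ENNReal

/-- A function of bounded variation on `ℝ` is measurable (as a difference of two
monotone functions). -/
lemma bv_measurable {f : ℝ → ℝ} (h : BoundedVariationOn f Set.univ) : Measurable f := by
  obtain ⟨p, q, hp, hq, hpq⟩ :=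
    h.locallyBoundedVariationOn.exists_monotoneOn_sub_monotoneOn
  rw [hpq]
  exact ((monotoneOn_univ.1 hp).measurable).sub ((monotoneOn_univ.1 hq).measurable)

/-- The "median" of `g` on `[0,1]`. -/
noncomputable def medI (g : ℝ → ℝ) : ℝ :=
  sInf {t : ℝ | volume {x ∈ Set.Icc (0:ℝ) 1 | t < g x} ≤ 1/2}

/-- If `h l - a l → 0` pointwise outside a null set, then the medians of `h l` on
`[0,1]` track the constants `a l`. -/
lemma med_tendsto {h : ℕ → ℝ → ℝ} {a : ℕ → ℝ} (hm : ∀ l, Measurable (h l))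
    {S : Set ℝ} (hS : volume S = 0)
    (hconv : ∀ x ∉ S, Tendsto (fun l => h l x - a l) atTop (nhds 0)) :
    Tendsto (fun l => medI (h l) - a l) atTop (nhds 0) := by
  have hIcc : volume (Set.Icc (0:ℝ) 1) = 1 := by simp
  haveI : Fact (volume (Set.Icc (0:ℝ) 1) < ⊤) := ⟨by rw [hIcc]; exact ENNReal.one_lt_top⟩
  set μ := volume.restrict (Set.Icc (0:ℝ) 1) with hμ
  -- convergence in measure
  have htm : TendstoInMeasure μ (fun l x => h l x - a l) atTop (fun _ => 0) := by
    apply tendstoInMeasure_of_tendsto_ae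
    · exact fun l => ((hm l).sub measurable_const).aestronglyMeasurable
    · have hμS : μ S = 0 :=
        le_antisymm (le_trans (Measure.restrict_apply_le _ _) hS.le) zero_le
      filter_upwards [measure_eq_zero_iff_ae_notMem.mp hμS] with x hx using hconv x hx
  rw [Metric.tendsto_atTop]
  intro ε hε
  have hhalf := htm (ENNReal.ofReal (ε/2)) (ENNReal.ofReal_pos.mpr (by linarith))
  have hev : ∀ᶠ l in atTop, μ {x | ε/2 ≤ dist (h l x - a l) 0} < 1/2 := by
    have h12 := hhalf.eventually_lt_const (show (0:ℝ≥0∞) < 1/2 by norm_num)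
    filter_upwards [h12] with l hl
    have hset : {x | ε/2 ≤ dist (h l x - a l) 0} = {x | ENNReal.ofReal (ε/2) ≤
        edist ((fun l x => h l x - a l) l x) ((fun _ => (0:ℝ)) x)} := by
      ext x
      simp only [Set.mem_setOf_eq, edist_dist, ENNReal.ofReal_le_ofReal_iff dist_nonneg]
    rw [hset]
    exact hl
  rw [eventually_atTop] at hev
  obtain ⟨N, hN⟩ := hev
  refine ⟨N, fun l hl => ?_⟩
  have hbad := hN l hl
  set B := {x | ε/2 ≤ dist (h l x - a l) 0} with hB
  have hμB : μ B = volume (B ∩ Set.Icc (0:ℝ) 1) :=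
    Measure.restrict_apply' measurableSet_Icc
  -- upper bound: `a l + ε/2` lies in the defining set
  have hmemset : a l + ε/2 ∈ {t : ℝ | volume {x ∈ Set.Icc (0:ℝ) 1 | t < h l x} ≤ 1/2} := by
    have hsub : {x ∈ Set.Icc (0:ℝ) 1 | a l + ε/2 < h l x} ⊆ B ∩ Set.Icc (0:ℝ) 1 := by
      rintro x ⟨hx1, hx2⟩
      refine ⟨?_, hx1⟩
      simp only [hB, Set.mem_setOf_eq, Real.dist_eq, sub_zero]
      calc ε/2 ≤ h l x - a l := by linarith
        _ ≤ |h l x - a l| := le_abs_self _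
    calc volume {x ∈ Set.Icc (0:ℝ) 1 | a l + ε/2 < h l x}
        ≤ volume (B ∩ Set.Icc (0:ℝ) 1) := measure_mono hsub
      _ = μ B := hμB.symm
      _ ≤ 1/2 := hbad.le
  -- lower bound: every `t` in the defining set satisfies `a l - ε/2 ≤ t`
  have hlb : ∀ t ∈ {t : ℝ | volume {x ∈ Set.Icc (0:ℝ) 1 | t < h l x} ≤ 1/2},
      a l - ε/2 ≤ t := by
    intro t ht
    by_contra hc
    push_neg at hc
    have hsub : Set.Icc (0:ℝ) 1 ⊆ {x ∈ Set.Icc (0:ℝ) 1 | t < h l x} ∪ (B ∩ Set.Icc (0:ℝ) 1) := by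
      intro x hx
      by_cases hxB : x ∈ B
      · exact Or.inr ⟨hxB, hx⟩
      · left
        refine ⟨hx, ?_⟩
        simp only [hB, Set.mem_setOf_eq, Real.dist_eq, sub_zero, not_le] at hxB
        have := abs_lt.mp hxB
        linarith [this.1]
    have h1 : (1:ℝ≥0∞) ≤ volume {x ∈ Set.Icc (0:ℝ) 1 | t < h l x} + μ B := by
      rw [hμB]
      calc (1:ℝ≥0∞) = volume (Set.Icc (0:ℝ) 1) := hIcc.symm
        _ ≤ volume ({x ∈ Set.Icc (0:ℝ) 1 | t < h l x} ∪ (B ∩ Set.Icc (0:ℝ) 1)) :=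
          measure_mono hsub
        _ ≤ _ := measure_union_le _ _
    have h2 : volume {x ∈ Set.Icc (0:ℝ) 1 | t < h l x} + μ B < 1/2 + 1/2 :=
      ENNReal.add_lt_add_of_le_of_lt (ne_top_of_le_ne_top (by norm_num) ht) ht hbad
    rw [ENNReal.add_halves] at h2
    exact absurd (lt_of_le_of_lt h1 h2) (lt_irrefl _)
  have hbdd : BddBelow {t : ℝ | volume {x ∈ Set.Icc (0:ℝ) 1 | t < h l x} ≤ 1/2} :=
    ⟨a l - ε/2, hlb⟩
  have hub : medI (h l) ≤ a l + ε/2 := csInf_le hbdd hmemset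
  have hlo : a l - ε/2 ≤ medI (h l) := le_csInf ⟨_, hmemset⟩ hlb
  rw [Real.dist_eq, sub_zero, abs_lt]
  constructor <;> linarith

/-- For `f_n, f ∈ W`: `f_n` converges almost basically to `f` if and only if there
is a sequence `(c_n)` of reals such that every subsequence has a further
subsequence with `f_{n_{k_l}}(x) - c_{n_{k_l}} → f(x)` outside a Lebesgue-null
set. -/
theorem stmt14 (F : ℕ → ℝ → ℝ) (f : ℝ → ℝ) (hF : ∀ n, MemW (F n)) (hf : MemW f) :
    AlmBasic F f ↔ ∃ c : ℕ → ℝ, ∀ φ : ℕ → ℕ, StrictMono φ →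
      ∃ ψ : ℕ → ℕ, StrictMono ψ ∧ ∃ S : Set ℝ, volume S = 0 ∧
        ∀ x ∉ S, Tendsto (fun l => F (φ (ψ l)) x - c (φ (ψ l))) atTop (nhds (f x)) := by
  constructor
  · intro hAB
    refine ⟨fun n => medI (fun x => F n x - f x), ?_⟩
    intro φ hφ
    obtain ⟨ψ, hψ, S, hS, hST⟩ := hAB φ hφ
    refine ⟨ψ, hψ, S, hS, ?_⟩
    have hSne : ∃ y, y ∉ S := by
      by_contra hc
      push_neg at hc
      have hU : S = Set.univ := Set.eq_univ_of_forall hc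
      rw [hU] at hS
      simp at hS
    obtain ⟨y₀, hy₀⟩ := hSne
    have hmed : Tendsto (fun l => medI (fun x => F (φ (ψ l)) x - f x)
        - (F (φ (ψ l)) y₀ - f y₀)) atTop (nhds 0) := by
      apply med_tendsto (h := fun l x => F (φ (ψ l)) x - f x)
        (a := fun l => F (φ (ψ l)) y₀ - f y₀)
      · exact fun l => (bv_measurable (hF _).2.1).sub (bv_measurable hf.2.1)
      · exact hS
      · intro x hx
        have h2 : Tendsto (fun l => (F (φ (ψ l)) x - F (φ (ψ l)) y₀) - (f x - f y₀))
            atTop (nhds ((f x - f y₀) - (f x - f y₀))) :=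
          (hST x hx y₀ hy₀).sub_const (f x - f y₀)
        rw [sub_self] at h2
        have heq : (fun l => (F (φ (ψ l)) x - f x) - (F (φ (ψ l)) y₀ - f y₀))
            = fun l => (F (φ (ψ l)) x - F (φ (ψ l)) y₀) - (f x - f y₀) := by
          funext l; ring
        rw [heq]
        exact h2
    intro x hx
    have h1 := hST x hx y₀ hy₀
    have h2 := (h1.sub hmed).add_const (f y₀)
    have heq : (fun l => F (φ (ψ l)) x - medI (fun x => F (φ (ψ l)) x - f x))
        = fun l => (F (φ (ψ l)) x - F (φ (ψ l)) y₀)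
          - (medI (fun x => F (φ (ψ l)) x - f x) - (F (φ (ψ l)) y₀ - f y₀)) + f y₀ := by
      funext l; ring
    have hval : f x = (f x - f y₀) - 0 + f y₀ := by ring
    rw [show (fun l => F (φ (ψ l)) x - medI (fun x => F (φ (ψ l)) x - f x)) = _ from heq, hval]
    exact h2
  · rintro ⟨c, hc⟩ φ hφ
    obtain ⟨ψ, hψ, S, hS, h⟩ := hc φ hφ
    refine ⟨ψ, hψ, S, hS, fun x hx y hy => ?_⟩
    have h2 := (h x hx).sub (h y hy)
    have heq : (fun l => F (φ (ψ l)) x - F (φ (ψ l)) y)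
        = fun l => (F (φ (ψ l)) x - c (φ (ψ l))) - (F (φ (ψ l)) y - c (φ (ψ l))) := by
      funext l; ring
    rw [heq]
    exact h2
end

section
/- Suppose (μ_n) is a sequence of finite signed measures on ℝ whose distribution functions F^{(μ_n)} converge almost basically to F^{(μ)} for a finite signed measure μ, and (μ_n) is locally uniformly bounded in variation, i.e., sup_n |μ_n|([−r, r]) < ∞ for every r > 0. Then μ_n converges vaguely to μ: ∫ f dμ_n → ∫ f dμ for all f ∈ C_c(ℝ). -/
open MeasureTheory Filter
open scoped ENNReal

/-- Distribution function of a finite signed measure: `F^{(μ)}(x) = μ((-∞, x])`. -/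
def DistF (s : SignedMeasure ℝ) : ℝ → ℝ := fun x => s (Set.Iic x)

section Aux

open Set
open scoped Topology Convolution Pointwise

lemma sm_apply_eq (s : SignedMeasure ℝ) {A : Set ℝ} (hA : MeasurableSet A) :
    s A = (s.toJordanDecomposition.posPart A).toReal
        - (s.toJordanDecomposition.negPart A).toReal := by
  conv_lhs => rw [← s.toSignedMeasure_toJordanDecomposition]
  rw [JordanDecomposition.toSignedMeasure]
  exact Measure.toSignedMeasure_sub_apply hA

lemma tv_finite (s : SignedMeasure ℝ) : IsFiniteMeasure s.totalVariation := by
  constructor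
  rw [SignedMeasure.totalVariation, Measure.add_apply]
  exact ENNReal.add_lt_top.mpr ⟨measure_lt_top _ _, measure_lt_top _ _⟩

lemma abs_sm_le (s : SignedMeasure ℝ) {A : Set ℝ} (hA : MeasurableSet A) :
    |s A| ≤ (s.totalVariation A).toReal := by
  rw [sm_apply_eq s hA, SignedMeasure.totalVariation, Measure.add_apply,
    ENNReal.toReal_add (measure_ne_top _ _) (measure_ne_top _ _)]
  have h1 := ENNReal.toReal_nonneg (a := s.toJordanDecomposition.posPart A)
  have h2 := ENNReal.toReal_nonneg (a := s.toJordanDecomposition.negPart A)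
  rw [abs_le]
  constructor <;> linarith

lemma distF_sub (s : SignedMeasure ℝ) {x y : ℝ} (h : y ≤ x) :
    DistF s x - DistF s y = s (Set.Ioc y x) := by
  have hd : Disjoint (Set.Iic y) (Set.Ioc y x) :=
    Set.disjoint_left.mpr fun t ht ht' => absurd ht'.1 (not_lt.mpr ht)
  have : s (Set.Iic x) = s (Set.Iic y) + s (Set.Ioc y x) := by
    rw [← VectorMeasure.of_union hd measurableSet_Iic measurableSet_Ioc,
      Set.Iic_union_Ioc_eq_Iic h]
  simp only [DistF]
  rw [this]; ring

lemma distF_diff_bound (s : SignedMeasure ℝ) {r x y : ℝ}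
    (hx : x ∈ Set.Icc (-r) r) (hy : y ∈ Set.Icc (-r) r) :
    |DistF s x - DistF s y| ≤ (s.totalVariation (Set.Icc (-r) r)).toReal := by
  haveI := tv_finite s
  rcases le_total y x with h | h
  · rw [distF_sub s h]
    refine (abs_sm_le s measurableSet_Ioc).trans ?_
    exact ENNReal.toReal_mono (measure_ne_top _ _)
      (measure_mono fun t ht => ⟨hy.1.trans ht.1.le, ht.2.trans hx.2⟩)
  · rw [abs_sub_comm, distF_sub s h]
    refine (abs_sm_le s measurableSet_Ioc).trans ?_
    exact ENNReal.toReal_mono (measure_ne_top _ _)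
      (measure_mono fun t ht => ⟨hx.1.trans ht.1.le, ht.2.trans hy.2⟩)

lemma distF_measurable (s : SignedMeasure ℝ) : Measurable (DistF s) := by
  have h : DistF s = fun x => (s.toJordanDecomposition.posPart (Set.Iic x)).toReal
      - (s.toJordanDecomposition.negPart (Set.Iic x)).toReal :=
    funext fun x => sm_apply_eq s measurableSet_Iic
  rw [h]
  have m1 : Monotone (fun x => (s.toJordanDecomposition.posPart (Set.Iic x)).toReal) :=
    fun a b hab => ENNReal.toReal_mono (measure_ne_top _ _)
      (measure_mono (Set.Iic_subset_Iic.mpr hab))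
  have m2 : Monotone (fun x => (s.toJordanDecomposition.negPart (Set.Iic x)).toReal) :=
    fun a b hab => ENNReal.toReal_mono (measure_ne_top _ _)
      (measure_mono (Set.Iic_subset_Iic.mpr hab))
  exact m1.measurable.sub m2.measurable

lemma integral_eq_neg_integral_deriv (ρ : Measure ℝ) [IsFiniteMeasure ρ] {g : ℝ → ℝ}
    (hg : ContDiff ℝ 1 g) (hgs : HasCompactSupport g) :
    ∫ x, g x ∂ρ = -∫ t, deriv g t * (ρ (Set.Iic t)).toReal := by
  have hdc : Continuous (deriv g) := hg.continuous_deriv le_rfl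
  have hds : HasCompactSupport (deriv g) := hgs.deriv
  have hint : Integrable (deriv g) volume := hdc.integrable_of_hasCompactSupport hds
  set f : ℝ → ℝ → ℝ := fun x t => Set.indicator (Set.Ici x) (deriv g) t with hf
  have hGint : Integrable (fun p : ℝ × ℝ => deriv g p.2) (ρ.prod volume) := by
    have h1 : Integrable (deriv g) ((ρ.prod volume).map Prod.snd) := by
      rw [Measure.map_snd_prod]
      exact hint.smul_measure (measure_ne_top ρ Set.univ)
    have hasm : AEStronglyMeasurable (deriv g) ((ρ.prod volume).map Prod.snd) := by
      rw [Measure.map_snd_prod]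
      exact hint.aestronglyMeasurable.smul_measure _
    rw [integrable_map_measure hasm measurable_snd.aemeasurable] at h1
    exact h1
  have hFmeas : AEStronglyMeasurable (Function.uncurry f) (ρ.prod volume) := by
    have : Function.uncurry f = Set.indicator {p : ℝ × ℝ | p.1 ≤ p.2}
        (fun q : ℝ × ℝ => deriv g q.2) := by
      ext p
      simp [Function.uncurry, hf, Set.indicator_apply, Set.mem_Ici]
    rw [this]
    exact (((hdc.comp continuous_snd).stronglyMeasurable).indicator
      (measurableSet_le measurable_fst measurable_snd)).aestronglyMeasurable
  have hFint : Integrable (Function.uncurry f) (ρ.prod volume) := by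
    refine hGint.norm.mono' hFmeas (Filter.Eventually.of_forall fun p => ?_)
    simp only [Function.uncurry, hf]
    exact (norm_indicator_le_norm_self _ _).trans (le_refl _)
  have hswap := integral_integral_swap hFint
  have hleft : ∀ x : ℝ, (∫ t, f x t) = -g x := by
    intro x
    rw [hf]
    simp only
    rw [integral_indicator measurableSet_Ici, integral_Ici_eq_integral_Ioi]
    exact hgs.integral_Ioi_deriv_eq hg x
  have hright : ∀ t : ℝ, (∫ x, f x t ∂ρ) = (ρ (Set.Iic t)).toReal * deriv g t := by
    intro t
    have : (fun x => f x t) = Set.indicator (Set.Iic t) (fun _ => deriv g t) := by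
      ext x
      simp [hf, Set.indicator_apply, Set.mem_Ici, Set.mem_Iic]
    rw [this, integral_indicator_const _ measurableSet_Iic, smul_eq_mul, measureReal_def]
  rw [funext hleft] at hswap
  have : (∫ x, (fun y => -g y) x ∂ρ) = ∫ t, (ρ (Set.Iic t)).toReal * deriv g t := by
    rw [hswap]
    exact integral_congr_ae (Filter.Eventually.of_forall hright)
  rw [integral_neg] at this
  have := neg_eq_iff_eq_neg.mp this
  rw [this]
  congr 1
  exact integral_congr_ae (Filter.Eventually.of_forall fun t => (mul_comm _ _))

lemma integrable_deriv_mul_distlike (ρ : Measure ℝ) [IsFiniteMeasure ρ] {g : ℝ → ℝ}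
    (hg : ContDiff ℝ 1 g) (hgs : HasCompactSupport g) :
    Integrable (fun t => deriv g t * (ρ (Set.Iic t)).toReal) volume := by
  have hdc : Continuous (deriv g) := hg.continuous_deriv le_rfl
  have hint : Integrable (deriv g) volume := hdc.integrable_of_hasCompactSupport hgs.deriv
  have hmono : Monotone (fun t => (ρ (Set.Iic t)).toReal) :=
    fun a b hab => ENNReal.toReal_mono (measure_ne_top _ _)
      (measure_mono (Set.Iic_subset_Iic.mpr hab))
  refine (hint.norm.mul_const (ρ Set.univ).toReal).mono'
    ((hdc.measurable.mul hmono.measurable).aestronglyMeasurable)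
    (Filter.Eventually.of_forall fun t => ?_)
  rw [norm_mul, Real.norm_eq_abs ((ρ (Set.Iic t)).toReal),
    abs_of_nonneg ENNReal.toReal_nonneg]
  exact mul_le_mul_of_nonneg_left
    (ENNReal.toReal_mono (measure_ne_top _ _) (measure_mono (Set.subset_univ _)))
    (norm_nonneg _)

lemma sintegral_eq_c1 (s : SignedMeasure ℝ) {g : ℝ → ℝ}
    (hg : ContDiff ℝ 1 g) (hgs : HasCompactSupport g) (c : ℝ) :
    sintegral s g = -∫ t, deriv g t * (DistF s t - c) := by
  have hdc : Continuous (deriv g) := hg.continuous_deriv le_rfl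
  have hint : Integrable (deriv g) volume := hdc.integrable_of_hasCompactSupport hgs.deriv
  have hgint : Integrable g volume := hg.continuous.integrable_of_hasCompactSupport hgs
  have hzero : (∫ t, deriv g t) = 0 :=
    integral_eq_zero_of_hasDerivAt_of_integrable
      (fun x => (hg.differentiable one_ne_zero x).hasDerivAt) hint hgint
  have i1 := integrable_deriv_mul_distlike s.toJordanDecomposition.posPart hg hgs
  have i2 := integrable_deriv_mul_distlike s.toJordanDecomposition.negPart hg hgs
  have key : sintegral s g = -∫ t, deriv g t * DistF s t := by
    unfold sintegral
    rw [integral_eq_neg_integral_deriv _ hg hgs, integral_eq_neg_integral_deriv _ hg hgs,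
      neg_sub_neg, ← neg_sub, ← integral_sub i1 i2]
    congr 1
    refine integral_congr_ae (Filter.Eventually.of_forall fun t => ?_)
    simp only [DistF]
    rw [sm_apply_eq s measurableSet_Iic]
    ring
  rw [key]
  have : (∫ t, deriv g t * (DistF s t - c))
      = (∫ t, deriv g t * DistF s t) - (∫ t, deriv g t * c) := by
    rw [← integral_sub]
    · refine integral_congr_ae (Filter.Eventually.of_forall fun t => ?_); ring
    · have : (fun t => deriv g t * DistF s t)
          = fun t => deriv g t * ((s.toJordanDecomposition.posPart (Set.Iic t)).toReal)
            - deriv g t * ((s.toJordanDecomposition.negPart (Set.Iic t)).toReal) := by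
        funext t
        rw [DistF, sm_apply_eq s measurableSet_Iic]; ring
      rw [this]
      exact i1.sub i2
    · exact hint.mul_const c
  rw [this, integral_mul_const, hzero, zero_mul, sub_zero]

lemma tendsto_c1 (σ : ℕ → SignedMeasure ℝ) (ν : SignedMeasure ℝ) (S : Set ℝ)
    (hS : volume S = 0)
    (hconv : ∀ x ∉ S, ∀ y ∉ S, Tendsto (fun l => DistF (σ l) x - DistF (σ l) y)
      atTop (𝓝 (DistF ν x - DistF ν y)))
    (y : ℝ) (hy : y ∉ S) (r : ℝ) (hyr : y ∈ Set.Icc (-r) r)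
    (C : ℝ≥0∞) (hC : C ≠ ⊤) (hCb : ∀ l, (σ l).totalVariation (Set.Icc (-r) r) ≤ C)
    (g : ℝ → ℝ) (hg : ContDiff ℝ 1 g) (hgs : HasCompactSupport g)
    (hgsupp : tsupport g ⊆ Set.Icc (-r) r) :
    Tendsto (fun l => sintegral (σ l) g) atTop (𝓝 (sintegral ν g)) := by
  have hdc : Continuous (deriv g) := hg.continuous_deriv le_rfl
  have hds : HasCompactSupport (deriv g) := hgs.deriv
  have hint : Integrable (deriv g) volume := hdc.integrable_of_hasCompactSupport hds
  have hdsupp : tsupport (deriv g) ⊆ Set.Icc (-r) r :=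
    (closure_minimal (support_deriv_subset) (isClosed_tsupport g)).trans hgsupp
  have key : Tendsto (fun l => ∫ t, deriv g t * (DistF (σ l) t - DistF (σ l) y))
      atTop (𝓝 (∫ t, deriv g t * (DistF ν t - DistF ν y))) := by
    refine tendsto_integral_of_dominated_convergence
      (fun t => ‖deriv g t‖ * C.toReal) ?_ ?_ ?_ ?_
    · intro l
      exact (hdc.measurable.mul
        ((distF_measurable (σ l)).sub measurable_const)).aestronglyMeasurable
    · exact hint.norm.mul_const _
    · intro l
      refine Filter.Eventually.of_forall fun t => ?_
      by_cases ht : t ∈ tsupport (deriv g)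
      · rw [norm_mul]
        refine mul_le_mul_of_nonneg_left ?_ (norm_nonneg _)
        rw [Real.norm_eq_abs]
        refine (distF_diff_bound (σ l) (hdsupp ht) hyr).trans ?_
        exact ENNReal.toReal_mono hC (hCb l)
      · have : deriv g t = 0 := image_eq_zero_of_notMem_tsupport ht
        rw [this]
        simp only [zero_mul, norm_zero]
        positivity
    · have hae : ∀ᵐ t : ℝ, t ∉ S := by
        rw [MeasureTheory.ae_iff]
        simpa using hS
      filter_upwards [hae] with t ht
      exact (hconv t ht y hy).const_mul _
  have e1 : ∀ l, sintegral (σ l) g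
      = -∫ t, deriv g t * (DistF (σ l) t - DistF (σ l) y) :=
    fun l => sintegral_eq_c1 (σ l) hg hgs _
  rw [sintegral_eq_c1 ν hg hgs (DistF ν y)]
  exact key.neg.congr fun l => (e1 l).symm

lemma hcs_sub {f g : ℝ → ℝ} (hf : HasCompactSupport f) (hg : HasCompactSupport g) :
    HasCompactSupport (fun x => f x - g x) := by
  refine HasCompactSupport.intro (hf.union hg) fun x hx => ?_
  rw [image_eq_zero_of_notMem_tsupport (fun h => hx (Set.mem_union_left _ h)),
    image_eq_zero_of_notMem_tsupport (fun h => hx (Set.mem_union_right _ h)), sub_zero]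

lemma sintegral_sub (s : SignedMeasure ℝ) {f g : ℝ → ℝ}
    (hf : Continuous f) (hfs : HasCompactSupport f)
    (hg : Continuous g) (hgs : HasCompactSupport g) :
    sintegral s (fun x => f x - g x) = sintegral s f - sintegral s g := by
  unfold sintegral
  rw [integral_sub (hf.integrable_of_hasCompactSupport hfs)
      (hg.integrable_of_hasCompactSupport hgs),
    integral_sub (hf.integrable_of_hasCompactSupport hfs)
      (hg.integrable_of_hasCompactSupport hgs)]
  ring

lemma abs_sintegral_le (s : SignedMeasure ℝ) {f : ℝ → ℝ}
    (hf : Continuous f) (hfs : HasCompactSupport f) {K : Set ℝ} (hK : MeasurableSet K)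
    (hsub : tsupport f ⊆ K) {M : ℝ} (hM : ∀ x, |f x| ≤ M) :
    |sintegral s f| ≤ M * (s.totalVariation K).toReal := by
  have key : ∀ ρ : Measure ℝ, IsFiniteMeasure ρ → |∫ x, f x ∂ρ| ≤ M * (ρ K).toReal := by
    intro ρ hρ
    have h0 : (∫ x, f x ∂ρ) = ∫ x in K, f x ∂ρ := by
      refine (setIntegral_eq_integral_of_forall_compl_eq_zero fun x hx => ?_).symm
      exact image_eq_zero_of_notMem_tsupport (fun hmem => hx (hsub hmem))
    rw [h0, ← Real.norm_eq_abs]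
    exact norm_setIntegral_le_of_norm_le_const (measure_lt_top ρ K)
      fun x _ => (Real.norm_eq_abs (f x)) ▸ hM x
  unfold sintegral
  have h1 := key s.toJordanDecomposition.posPart inferInstance
  have h2 := key s.toJordanDecomposition.negPart inferInstance
  have hMnn : 0 ≤ M := (abs_nonneg (f 0)).trans (hM 0)
  rw [SignedMeasure.totalVariation, Measure.add_apply,
    ENNReal.toReal_add (measure_ne_top _ _) (measure_ne_top _ _)]
  calc |_ - _| ≤ |∫ x, f x ∂s.toJordanDecomposition.posPart|
        + |∫ x, f x ∂s.toJordanDecomposition.negPart| := abs_sub _ _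
    _ ≤ M * (s.toJordanDecomposition.posPart K).toReal
        + M * (s.toJordanDecomposition.negPart K).toReal := add_le_add h1 h2
    _ = _ := by ring

lemma exists_approx {f : ℝ → ℝ} (hf : Continuous f) (hfs : HasCompactSupport f)
    {ε : ℝ} (hε : 0 < ε) {a : ℝ} (ha : tsupport f ⊆ Set.Icc (-a) a) :
    ∃ g : ℝ → ℝ, ContDiff ℝ 1 g ∧ HasCompactSupport g ∧
      tsupport g ⊆ Set.Icc (-(a + 1)) (a + 1) ∧ ∀ x, |f x - g x| ≤ ε := by
  have huc : UniformContinuous f := hfs.uniformContinuous_of_continuous hf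
  obtain ⟨δ, hδpos, hδ⟩ := Metric.uniformContinuous_iff.mp huc ε hε
  set δ' : ℝ := min δ 1 with hδ'
  have hδ'pos : 0 < δ' := lt_min hδpos one_pos
  set φ : ContDiffBump (0 : ℝ) := ⟨δ' / 2, δ', by positivity, by
    rw [div_lt_iff₀ (by norm_num : (0:ℝ) < 2)]; nlinarith⟩ with hφ
  set g : ℝ → ℝ := (φ.normed volume) ⋆[ContinuousLinearMap.lsmul ℝ ℝ, volume] f with hg
  have hφs : HasCompactSupport (φ.normed volume) := φ.hasCompactSupport_normed
  have hgsmooth : ContDiff ℝ 1 g :=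
    hφs.contDiff_convolution_left _ (φ.contDiff_normed (n := 1)) hf.locallyIntegrable
  have hgcs : HasCompactSupport g := hφs.convolution _ hfs
  refine ⟨g, hgsmooth, hgcs, ?_, ?_⟩
  · have hsub : Function.support g ⊆ tsupport (φ.normed volume) + tsupport f :=
      (support_convolution_subset _).trans
        (Set.add_subset_add subset_closure subset_closure)
    have hcl : IsClosed (tsupport (φ.normed volume) + tsupport f) :=
      (hφs.isCompact.add hfs.isCompact).isClosed
    refine (closure_minimal hsub hcl).trans ?_
    rintro x ⟨u, hu, v, hv, rfl⟩
    rw [φ.tsupport_normed_eq] at hu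
    have hu' : |u| ≤ 1 := by
      have := mem_closedBall_iff_norm.mp hu
      simp only [sub_zero, Real.norm_eq_abs] at this
      exact this.trans (min_le_right _ _)
    have hv' := ha hv
    rw [Set.mem_Icc] at hv' ⊢
    rw [abs_le] at hu'
    constructor
    · show -(a + 1) ≤ u + v
      linarith [hv'.1, hu'.1]
    · show u + v ≤ a + 1
      linarith [hv'.2, hu'.2]
  · intro x
    have := φ.dist_normed_convolution_le (μ := volume) hf.aestronglyMeasurable
      (x₀ := x) (ε := ε) ?_
    · rw [Real.dist_eq, abs_sub_comm] at this
      exact this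
    · intro z hz
      rw [Real.dist_eq]
      refine le_of_lt (hδ ?_)
      rw [Real.dist_eq]
      have : |z - x| < δ' := by
        have := Metric.mem_ball.mp hz
        rwa [Real.dist_eq] at this
      exact this.trans_le (min_le_left _ _)

end Aux

/-- If the distribution functions of the finite signed measures `μ_n` converge
almost basically to the distribution function of `μ`, and `(μ_n)` is locally
uniformly bounded in variation, then `μ_n → μ` vaguely. -/
theorem stmt16 (μ : ℕ → SignedMeasure ℝ) (ν : SignedMeasure ℝ)
    (halm : AlmBasic (fun n => DistF (μ n)) (DistF ν))
    (hbd : ∀ r : ℝ, 0 < r → ∃ C : ℝ≥0∞, C ≠ ⊤ ∧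
      ∀ n, (μ n).totalVariation (Set.Icc (-r) r) ≤ C)
    (f : ℝ → ℝ) (hf : Continuous f) (hsupp : HasCompactSupport f) :
    Tendsto (fun n => sintegral (μ n) f) atTop (nhds (sintegral ν f)) := by
  refine tendsto_of_subseq_tendsto fun ns hns => ?_
  obtain ⟨m0, hm0, hcomp⟩ := strictMono_subseq_of_tendsto_atTop hns
  obtain ⟨ψ, hψ, S, hS, hconv⟩ := halm (ns ∘ m0) hcomp
  refine ⟨m0 ∘ ψ, ?_⟩
  show Tendsto (fun l => sintegral (μ (ns (m0 (ψ l)))) f) atTop (nhds (sintegral ν f))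
  set σ : ℕ → SignedMeasure ℝ := fun l => μ (ns (m0 (ψ l))) with hσ
  have hconv' : ∀ x ∉ S, ∀ y ∉ S, Tendsto (fun l => DistF (σ l) x - DistF (σ l) y)
      atTop (nhds (DistF ν x - DistF ν y)) := fun x hx y hy => hconv x hx y hy
  -- pick a point outside S
  have hSne : ∃ y, y ∉ S := by
    by_contra h
    push_neg at h
    have hSuniv : S = Set.univ := Set.eq_univ_of_forall h
    rw [hSuniv, Real.volume_univ] at hS
    exact (ENNReal.top_ne_zero) hS
  obtain ⟨y, hy⟩ := hSne
  -- a compact interval containing the support of f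
  obtain ⟨a0, ha0⟩ := hsupp.isCompact.isBounded.subset_closedBall 0
  set a : ℝ := max a0 0 with hadef
  have haf : tsupport f ⊆ Set.Icc (-a) a := by
    intro x hx
    have h := ha0 hx
    rw [Metric.mem_closedBall, Real.dist_eq, sub_zero] at h
    exact Set.mem_Icc.mpr (abs_le.mp (h.trans (le_max_left _ _)))
  have ha_nn : 0 ≤ a := le_max_right _ _
  set r : ℝ := a + |y| + 2 with hrdef
  have hr : 0 < r := by positivity
  obtain ⟨C, hC, hCb⟩ := hbd r hr
  haveI := tv_finite ν
  set D : ℝ := (ν.totalVariation (Set.Icc (-r) r)).toReal with hDdef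
  have hDnn : 0 ≤ D := ENNReal.toReal_nonneg
  have hyr : y ∈ Set.Icc (-r) r := by
    rw [Set.mem_Icc]
    constructor <;> [linarith [neg_abs_le y]; linarith [le_abs_self y]]
  rw [Metric.tendsto_atTop]
  intro ε hε
  set M : ℝ := C.toReal + D + 1 with hMdef
  have hCnn : 0 ≤ C.toReal := ENNReal.toReal_nonneg
  have hMpos : 0 < M := by positivity
  set ε0 : ℝ := ε / (3 * M) with hε0def
  have hε0 : 0 < ε0 := by positivity
  obtain ⟨g, hg1, hgcs, hgsupp, hgapprox⟩ := exists_approx hf hsupp hε0 haf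
  have hg_cont : Continuous g := hg1.continuous
  have hIccsub : Set.Icc (-(a + 1)) (a + 1) ⊆ Set.Icc (-r) r :=
    Set.Icc_subset_Icc (by simp only [hrdef, neg_le_neg_iff]; linarith [abs_nonneg y])
      (by simp only [hrdef]; linarith [abs_nonneg y])
  have hgsupp' : tsupport g ⊆ Set.Icc (-r) r := hgsupp.trans hIccsub
  have hfsupp' : tsupport f ⊆ Set.Icc (-r) r := haf.trans
    ((Set.Icc_subset_Icc (by linarith) (by linarith)).trans hIccsub)
  have hc1 : Tendsto (fun l => sintegral (σ l) g) atTop (nhds (sintegral ν g)) :=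
    tendsto_c1 σ ν S hS hconv' y hy r hyr C hC (fun l => hCb _) g hg1 hgcs hgsupp'
  -- support of f - g
  have hsubfg : tsupport (fun x => f x - g x) ⊆ Set.Icc (-r) r := by
    refine closure_minimal (fun x hx => ?_) isClosed_Icc
    by_cases h1 : x ∈ tsupport f
    · exact hfsupp' h1
    by_cases h2 : x ∈ tsupport g
    · exact hgsupp' h2
    exact absurd (show (fun x => f x - g x) x = 0 by
      simp only []
      rw [image_eq_zero_of_notMem_tsupport h1, image_eq_zero_of_notMem_tsupport h2,
        sub_zero]) hx
  have hbound1 : ∀ l, |sintegral (σ l) (fun x => f x - g x)| ≤ ε0 * C.toReal := by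
    intro l
    refine (abs_sintegral_le (σ l) (hf.sub hg_cont) (hcs_sub hsupp hgcs)
      measurableSet_Icc hsubfg hgapprox).trans ?_
    exact mul_le_mul_of_nonneg_left (ENNReal.toReal_mono hC (hCb _)) hε0.le
  have hbound2 : |sintegral ν (fun x => f x - g x)| ≤ ε0 * D :=
    abs_sintegral_le ν (hf.sub hg_cont) (hcs_sub hsupp hgcs)
      measurableSet_Icc hsubfg hgapprox
  obtain ⟨N, hN⟩ := (Metric.tendsto_atTop.mp hc1) ε0 hε0
  refine ⟨N, fun n hn => ?_⟩
  have hd := hN n hn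
  rw [Real.dist_eq] at hd ⊢
  have e1 : sintegral (σ n) f - sintegral ν f
      = (sintegral (σ n) g - sintegral ν g)
        + sintegral (σ n) (fun x => f x - g x) - sintegral ν (fun x => f x - g x) := by
    rw [sintegral_sub (σ n) hf hsupp hg_cont hgcs, sintegral_sub ν hf hsupp hg_cont hgcs]
    ring
  have tri : |sintegral (σ n) f - sintegral ν f|
      ≤ |sintegral (σ n) g - sintegral ν g|
        + |sintegral (σ n) (fun x => f x - g x)| + |sintegral ν (fun x => f x - g x)| := by
    rw [e1]
    calc |_ + _ - _| ≤ |(sintegral (σ n) g - sintegral ν g)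
          + sintegral (σ n) (fun x => f x - g x)| + |sintegral ν (fun x => f x - g x)| :=
        abs_sub _ _
      _ ≤ _ := by
        have := abs_add_le (sintegral (σ n) g - sintegral ν g)
          (sintegral (σ n) (fun x => f x - g x))
        linarith
  have hε0M : ε0 * M = ε / 3 := by
    rw [hε0def]
    field_simp
  have : |sintegral (σ n) f - sintegral ν f| ≤ ε / 3 := by
    have hsum : ε0 + ε0 * C.toReal + ε0 * D = ε0 * M := by rw [hMdef]; ring
    linarith [hbound1 n, hbound2, tri, hd]
  linarith
end

section
/- Let (μ_n), μ be finite signed measures on ℝ such that μ_n converges almost basically to μ, and suppose there are decompositions μ_n = μ_n⁺ − μ_n⁻ into nonnegative finite measures with (μ_n⁺) locally uniformly bounded (sup_n μ_n⁺([−r, r]) < ∞ for all r > 0). Then (μ_n⁻) is locally uniformly bounded as well, and hence (μ_n) is locally uniformly bounded in variation. -/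
open MeasureTheory Filter
open scoped ENNReal

lemma meas_Iic_split (Q : Measure ℝ) [IsFiniteMeasure Q] {x y : ℝ} (h : y ≤ x) :
    (Q (Set.Iic x)).toReal = (Q (Set.Iic y)).toReal + (Q (Set.Ioc y x)).toReal := by
  rw [← Set.Iic_union_Ioc_eq_Iic h,
    measure_union (Set.Iic_disjoint_Ioc le_rfl) measurableSet_Ioc,
    ENNReal.toReal_add (measure_ne_top _ _) (measure_ne_top _ _)]

lemma distF_diff (μ : SignedMeasure ℝ) (P N : Measure ℝ) [IsFiniteMeasure P]
    [IsFiniteMeasure N] (h : μ = P.toSignedMeasure - N.toSignedMeasure) {x y : ℝ}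
    (hyx : y ≤ x) :
    DistF μ x - DistF μ y = (P (Set.Ioc y x)).toReal - (N (Set.Ioc y x)).toReal := by
  have hap : ∀ z : ℝ, μ (Set.Iic z) = (P (Set.Iic z)).toReal - (N (Set.Iic z)).toReal := by
    intro z
    rw [h, VectorMeasure.sub_apply,
      Measure.toSignedMeasure_apply_measurable measurableSet_Iic,
      Measure.toSignedMeasure_apply_measurable measurableSet_Iic]
    rfl
  simp only [DistF, hap, meas_Iic_split P hyx, meas_Iic_split N hyx]
  ring

open scoped NNReal in
lemma coe_mk_le {a : ℝ} (ha : 0 ≤ a) {b : ℝ≥0∞} (hb : b ≠ ⊤) (hab : a ≤ b.toReal) :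
    ((↑) : ℝ≥0 → ℝ≥0∞) ⟨a, ha⟩ ≤ b := by
  have h1 : ((↑) : ℝ≥0 → ℝ≥0∞) ⟨a, ha⟩ = ENNReal.ofReal a := by
    rw [ENNReal.ofReal]
    congr 1
    ext
    simp [Real.coe_toNNReal _ ha]
    rfl
  rw [h1, ← ENNReal.ofReal_toReal hb]
  exact ENNReal.ofReal_le_ofReal hab

lemma tv_le (μ : SignedMeasure ℝ) (P N : Measure ℝ) [IsFiniteMeasure P]
    [IsFiniteMeasure N] (h : μ = P.toSignedMeasure - N.toSignedMeasure)
    {E : Set ℝ} (hE : MeasurableSet E) :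
    μ.totalVariation E ≤ P E + N E := by
  have hap : ∀ A : Set ℝ, MeasurableSet A →
      μ A = (P A).toReal - (N A).toReal := by
    intro A hA
    rw [h, VectorMeasure.sub_apply, Measure.toSignedMeasure_apply_measurable hA,
      Measure.toSignedMeasure_apply_measurable hA]
    rfl
  obtain ⟨i, hi₁, hi₂, hi₃, hpos, hneg⟩ := μ.toJordanDecomposition_spec
  rw [SignedMeasure.totalVariation, Measure.add_apply, hpos, hneg,
    SignedMeasure.toMeasureOfZeroLE_apply _ _ _ hE,
    SignedMeasure.toMeasureOfLEZero_apply _ _ _ hE]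
  refine add_le_add (coe_mk_le _ (measure_ne_top _ _) ?_) (coe_mk_le _ (measure_ne_top _ _) ?_)
  · rw [hap _ (hi₁.inter hE)]
    have h2 : (P (i ∩ E)).toReal ≤ (P E).toReal :=
      ENNReal.toReal_mono (measure_ne_top _ _) (measure_mono Set.inter_subset_right)
    have := ENNReal.toReal_nonneg (a := N (i ∩ E))
    linarith
  · rw [hap _ (hi₁.compl.inter hE)]
    have h2 : (N (iᶜ ∩ E)).toReal ≤ (N E).toReal :=
      ENNReal.toReal_mono (measure_ne_top _ _) (measure_mono Set.inter_subset_right)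
    have := ENNReal.toReal_nonneg (a := P (iᶜ ∩ E))
    linarith

/-- If `μ_n → μ` almost basically and `μ_n = μ_n⁺ - μ_n⁻` with `(μ_n⁺)` locally
uniformly bounded, then `(μ_n⁻)` is locally uniformly bounded as well, and hence
`(μ_n)` is locally uniformly bounded in variation. -/
theorem stmt18 (μ : ℕ → SignedMeasure ℝ) (ν : SignedMeasure ℝ)
    (P N : ℕ → Measure ℝ) [∀ n, IsFiniteMeasure (P n)] [∀ n, IsFiniteMeasure (N n)]
    (hdec : ∀ n, μ n = (P n).toSignedMeasure - (N n).toSignedMeasure)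
    (halm : AlmBasic (fun n => DistF (μ n)) (DistF ν))
    (hP : ∀ r : ℝ, 0 < r → ∃ C : ℝ≥0∞, C ≠ ⊤ ∧ ∀ n, P n (Set.Icc (-r) r) ≤ C) :
    (∀ r : ℝ, 0 < r → ∃ C : ℝ≥0∞, C ≠ ⊤ ∧ ∀ n, N n (Set.Icc (-r) r) ≤ C) ∧
    (∀ r : ℝ, 0 < r → ∃ C : ℝ≥0∞, C ≠ ⊤ ∧
      ∀ n, (μ n).totalVariation (Set.Icc (-r) r) ≤ C) := by
  have hN : ∀ r : ℝ, 0 < r → ∃ C : ℝ≥0∞, C ≠ ⊤ ∧ ∀ n, N n (Set.Icc (-r) r) ≤ C := by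
    intro r hr
    set K : Set ℝ := Set.Icc (-r) r with hK
    set f : ℕ → ℝ := fun n => (N n K).toReal with hf
    by_contra hcon
    push_neg at hcon
    -- the sequence `f` is unbounded
    have hub : ∀ M : ℝ, ∃ n, M < f n := by
      intro M
      obtain ⟨n, hn⟩ := hcon (ENNReal.ofReal (max M 0)) ENNReal.ofReal_ne_top
      refine ⟨n, lt_of_le_of_lt (le_max_left M 0) ?_⟩
      have := ENNReal.toReal_strict_mono (measure_ne_top _ _) hn
      rwa [ENNReal.toReal_ofReal (le_max_right M 0)] at this
    have hfreq : ∀ m : ℕ, ∃ᶠ k in atTop, (m : ℝ) < f k := by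
      intro m
      rw [frequently_atTop]
      intro a
      obtain ⟨n, hn⟩ := hub ((m : ℝ) + ∑ j ∈ Finset.range a, |f j|)
      have hsum : (0:ℝ) ≤ ∑ j ∈ Finset.range a, |f j| :=
        Finset.sum_nonneg fun j _ => abs_nonneg _
      refine ⟨n, ?_, by linarith⟩
      by_contra hna
      push_neg at hna
      have h1 : f n ≤ ∑ j ∈ Finset.range a, |f j| :=
        le_trans (le_abs_self _)
          (Finset.single_le_sum (fun j _ => abs_nonneg (f j)) (Finset.mem_range.mpr hna))
      have hm : (0:ℝ) ≤ (m:ℝ) := Nat.cast_nonneg m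
      linarith
    obtain ⟨φ, hφ, hφf⟩ := Filter.extraction_forall_of_frequently hfreq
    obtain ⟨ψ, hψ, S, hS, hconv⟩ := halm φ hφ
    -- pick good points x > r and y < -r outside the null set S
    have hxex : (Set.Ioi r \ S).Nonempty := by
      apply MeasureTheory.nonempty_of_measure_ne_zero (μ := volume)
      rw [measure_diff_null hS, Real.volume_Ioi]
      simp
    have hyex : (Set.Iio (-r) \ S).Nonempty := by
      apply MeasureTheory.nonempty_of_measure_ne_zero (μ := volume)
      rw [measure_diff_null hS, Real.volume_Iio]
      simp
    obtain ⟨x, hx⟩ := hxex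
    obtain ⟨y, hy⟩ := hyex
    have hxr : r < x := hx.1
    have hyr : y < -r := hy.1
    have hyx : y ≤ x := by linarith
    have hKsub : K ⊆ Set.Ioc y x := fun z hz =>
      ⟨lt_of_lt_of_le hyr hz.1, le_trans hz.2 hxr.le⟩
    set R : ℝ := max x (-y) with hR
    have hR0 : 0 < R := lt_of_lt_of_le (lt_trans hr hxr) (le_max_left _ _)
    obtain ⟨C, hC, hCb⟩ := hP R hR0
    have hIocsub : Set.Ioc y x ⊆ Set.Icc (-R) R := fun z hz =>
      ⟨le_trans (neg_le.mpr (le_max_right x (-y))) hz.1.le,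
        le_trans hz.2 (le_max_left _ _)⟩
    set D : ℝ := DistF ν x - DistF ν y with hD
    have hDconv : Tendsto (fun l => DistF (μ (φ (ψ l))) x - DistF (μ (φ (ψ l))) y)
        atTop (nhds D) := hconv x hx.2 y hy.2
    have hev1 : ∀ᶠ l in atTop,
        D - 1 < DistF (μ (φ (ψ l))) x - DistF (μ (φ (ψ l))) y :=
      hDconv.eventually (eventually_gt_nhds (by linarith))
    have hev2 : ∀ᶠ l : ℕ in atTop, C.toReal - D + 1 < (l : ℝ) :=
      tendsto_natCast_atTop_atTop.eventually_gt_atTop _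
    obtain ⟨l, h1, h2⟩ := (hev1.and hev2).exists
    set n := φ (ψ l) with hn
    have key1 : f n ≤ (N n (Set.Ioc y x)).toReal :=
      ENNReal.toReal_mono (measure_ne_top _ _) (measure_mono hKsub)
    have key2 : DistF (μ n) x - DistF (μ n) y
        = (P n (Set.Ioc y x)).toReal - (N n (Set.Ioc y x)).toReal :=
      distF_diff _ _ _ (hdec n) hyx
    have key3 : (P n (Set.Ioc y x)).toReal ≤ C.toReal :=
      ENNReal.toReal_mono hC (le_trans (measure_mono hIocsub) (hCb n))
    have key4 : (l : ℝ) < f n := by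
      have hle : (l : ℝ) ≤ (ψ l : ℝ) := Nat.cast_le.mpr hψ.le_apply
      exact lt_of_le_of_lt hle (hφf (ψ l))
    linarith
  refine ⟨hN, fun r hr => ?_⟩
  obtain ⟨CP, hCP, hCPb⟩ := hP r hr
  obtain ⟨CN, hCN, hCNb⟩ := hN r hr
  refine ⟨CP + CN, ENNReal.add_ne_top.mpr ⟨hCP, hCN⟩, fun n => ?_⟩
  exact le_trans (tv_le _ _ _ (hdec n) measurableSet_Icc)
    (add_le_add (hCPb n) (hCNb n))
end
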